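/- arXiv:1908.05575 — 2 statements merged into one kernel-verified Lean document; each statement's English description precedes it below -/
import Mathlib

section
/- Assume ∫ |u|^q ρ(u) du < ∞ for every q ≥ 2. Then for every even integer p ≥ 2 there is a constant C, depending only on p, L and the moments of ρ but not on J, such that ( E ‖Cov_v − Cov_ρ‖₂^p )^{1/p} ≤ C J^{−1/2}. -/
open MeasureTheory Real Set Matrix ProbabilityTheory

noncomputable section

/-- Squared Euclidean norm of a vector in `Fin n → ℝ`. -/
def euclNorm2 {n : ℕ} (v : Fin n → ℝ) : ℝ := ∑ i, (v i) ^ 2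

/-- Euclidean norm of a vector in `Fin n → ℝ`. -/
def euclNorm {n : ℕ} (v : Fin n → ℝ) : ℝ := Real.sqrt (euclNorm2 v)

/-- Mean vector `E_ρ = ∫ u ρ(u) du` of a probability density `ρ` on `ℝ^L`. -/
def densMean (L : ℕ) (ρ : (Fin L → ℝ) → ℝ) : Fin L → ℝ :=
  fun i => ∫ u : Fin L → ℝ, u i * ρ u

/-- Covariance matrix `Cov_ρ = ∫ (u − E_ρ)(u − E_ρ)ᵀ ρ(u) du`. -/
def densCov (L : ℕ) (ρ : (Fin L → ℝ) → ℝ) : Matrix (Fin L) (Fin L) ℝ :=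
  Matrix.of fun i j =>
    ∫ u : Fin L → ℝ, (u i - densMean L ρ i) * (u j - densMean L ρ j) * ρ u

/-- Sample mean `v̄ = (1/J) Σ_j v^j` of `J` vectors in `ℝ^L`. -/
def sampleMean (L J : ℕ) (v : Fin J → Fin L → ℝ) : Fin L → ℝ :=
  fun i => (1 / (J : ℝ)) * ∑ j, v j i

/-- Empirical covariance `Cov_v = (1/J) Σ_j (v^j − v̄)(v^j − v̄)ᵀ`. -/
def sampleCov (L J : ℕ) (v : Fin J → Fin L → ℝ) : Matrix (Fin L) (Fin L) ℝ :=
  Matrix.of fun i i' =>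
    (1 / (J : ℝ)) * ∑ j, (v j i - sampleMean L J v i) * (v j i' - sampleMean L J v i')

/-- Spectral norm (`ℓ²`-operator norm) of a matrix. -/
def specNorm {m n : ℕ} (B : Matrix (Fin m) (Fin n) ℝ) : ℝ :=
  ‖LinearMap.toContinuousLinearMap (Matrix.toEuclideanLin B)‖

/-- The probability measure on `ℝ^L` with Lebesgue density `ρ`. -/
def densityMeasure (L : ℕ) (ρ : (Fin L → ℝ) → ℝ) : Measure (Fin L → ℝ) :=
  volume.withDensity (fun u => ENNReal.ofReal (ρ u))

/-- `v¹, …, v^J` are i.i.d. random vectors with common law given by the density `ρ`. -/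
def IsIIDSample {Ω : Type*} [MeasureSpace Ω] (L J : ℕ)
    (ρ : (Fin L → ℝ) → ℝ) (v : Fin J → Ω → Fin L → ℝ) : Prop :=
  (∀ j, Measurable (v j)) ∧
  iIndepFun v ℙ ∧
  (∀ j, Measure.map (v j) ℙ = densityMeasure L ρ)

set_option maxHeartbeats 1000000

section AuxiliaryLemmas

lemma euclNorm_nonneg {n : ℕ} (v : Fin n → ℝ) : 0 ≤ euclNorm v := Real.sqrt_nonneg _

lemma abs_apply_le_euclNorm {n : ℕ} (v : Fin n → ℝ) (i : Fin n) : |v i| ≤ euclNorm v := by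
  rw [euclNorm, ← Real.sqrt_sq_eq_abs]
  apply Real.sqrt_le_sqrt
  exact Finset.single_le_sum (f := fun i => (v i)^2) (fun i _ => sq_nonneg _) (Finset.mem_univ i)

lemma euclNorm_le_sum_abs {n : ℕ} (v : Fin n → ℝ) : euclNorm v ≤ ∑ i, |v i| := by
  rw [euclNorm]
  have h : euclNorm2 v ≤ (∑ i, |v i|)^2 := by
    rw [euclNorm2, sq, Finset.sum_mul]
    refine Finset.sum_le_sum fun i _ => ?_
    have hvi : (v i)^2 = |v i| * |v i| := by rw [← abs_mul, sq, abs_mul_self]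
    rw [hvi]
    refine mul_le_mul_of_nonneg_left ?_ (abs_nonneg _)
    exact Finset.single_le_sum (f := fun i => |v i|) (fun i _ => abs_nonneg _) (Finset.mem_univ i)
  calc Real.sqrt (euclNorm2 v) ≤ Real.sqrt ((∑ i, |v i|)^2) := Real.sqrt_le_sqrt h
    _ = ∑ i, |v i| := Real.sqrt_sq (Finset.sum_nonneg fun i _ => abs_nonneg _)

lemma eucl_norm_eq_euclNorm {m : ℕ} (y : EuclideanSpace ℝ (Fin m)) :
    ‖y‖ = euclNorm (fun i => y i) := by
  rw [EuclideanSpace.norm_eq, euclNorm, euclNorm2]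
  congr 1
  refine Finset.sum_congr rfl fun i _ => ?_
  rw [Real.norm_eq_abs, sq_abs]

lemma specNorm_nonneg {m n : ℕ} (B : Matrix (Fin m) (Fin n) ℝ) : 0 ≤ specNorm B := norm_nonneg _

lemma specNorm_le_sum_abs {m n : ℕ} (B : Matrix (Fin m) (Fin n) ℝ) :
    specNorm B ≤ ∑ i, ∑ j, |B i j| := by
  refine ContinuousLinearMap.opNorm_le_bound _
    (Finset.sum_nonneg fun i _ => Finset.sum_nonneg fun j _ => abs_nonneg _) fun x => ?_
  rw [LinearMap.coe_toContinuousLinearMap']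
  have happ : ∀ i, (Matrix.toEuclideanLin B x) i = ∑ j, B i j * x j := by
    intro i
    rfl
  have hx : ∀ j, |x j| ≤ ‖x‖ := by
    intro j
    rw [eucl_norm_eq_euclNorm]
    exact abs_apply_le_euclNorm _ j
  calc ‖Matrix.toEuclideanLin B x‖ = euclNorm (fun i => (Matrix.toEuclideanLin B x) i) :=
        eucl_norm_eq_euclNorm _
    _ ≤ ∑ i, |(Matrix.toEuclideanLin B x) i| := euclNorm_le_sum_abs _
    _ ≤ ∑ i, ∑ j, |B i j| * ‖x‖ := by
        refine Finset.sum_le_sum fun i _ => ?_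
        rw [happ i]
        calc |∑ j, B i j * x j| ≤ ∑ j, |B i j * x j| := Finset.abs_sum_le_sum_abs _ _
          _ ≤ ∑ j, |B i j| * ‖x‖ := by
              refine Finset.sum_le_sum fun j _ => ?_
              rw [abs_mul]
              exact mul_le_mul_of_nonneg_left (hx j) (abs_nonneg _)
    _ = (∑ i, ∑ j, |B i j|) * ‖x‖ := by rw [Finset.sum_mul]; simp [Finset.sum_mul]

/-- Counting: functions `Fin n → Fin J` with image of size at most `h` number
at most `(h+1) * J^h * h^n`. -/
lemma card_small_image_le (n J h : ℕ) (hJ : 1 ≤ J) :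
    (Finset.univ.filter
        (fun f : Fin n → Fin J => (Finset.univ.image f).card ≤ h)).card
      ≤ (h+1) * J^h * h^n := by
  classical
  set S := Finset.univ.filter
      (fun f : Fin n → Fin J => (Finset.univ.image f).card ≤ h) with hS
  set T := (Finset.univ : Finset (Finset (Fin J))).filter (fun A => A.card ≤ h) with hT
  have hsub : S ⊆ T.biUnion (fun A => Fintype.piFinset (fun _ : Fin n => A)) := by
    intro f hf
    rw [hS, Finset.mem_filter] at hf
    refine Finset.mem_biUnion.2 ⟨Finset.univ.image f, ?_, ?_⟩
    · rw [hT, Finset.mem_filter]; exact ⟨Finset.mem_univ _, hf.2⟩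
    · rw [Fintype.mem_piFinset]
      intro k; exact Finset.mem_image_of_mem f (Finset.mem_univ k)
  have h1 : S.card ≤ ∑ A ∈ T, (Fintype.piFinset (fun _ : Fin n => A)).card :=
    le_trans (Finset.card_le_card hsub) (Finset.card_biUnion_le)
  have h2 : ∀ A ∈ T, (Fintype.piFinset (fun _ : Fin n => A)).card ≤ h^n := by
    intro A hA
    rw [Fintype.card_piFinset]
    rw [hT, Finset.mem_filter] at hA
    calc ∏ _i : Fin n, A.card ≤ ∏ _i : Fin n, h :=
          Finset.prod_le_prod (fun _ _ => Nat.zero_le _) (fun _ _ => hA.2)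
      _ = h^n := by rw [Finset.prod_const, Finset.card_univ, Fintype.card_fin]
  have h3 : T.card ≤ (h+1) * J^h := by
    have hTsub : T ⊆ (Finset.range (h+1)).biUnion
        (fun m => Finset.powersetCard m (Finset.univ : Finset (Fin J))) := by
      intro A hA
      rw [hT, Finset.mem_filter] at hA
      refine Finset.mem_biUnion.2 ⟨A.card, Finset.mem_range.2 (Nat.lt_succ_of_le hA.2), ?_⟩
      rw [Finset.mem_powersetCard]
      exact ⟨Finset.subset_univ _, rfl⟩
    calc T.card ≤ ∑ m ∈ Finset.range (h+1), (Finset.powersetCard m (Finset.univ : Finset (Fin J))).card :=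
          le_trans (Finset.card_le_card hTsub) Finset.card_biUnion_le
      _ ≤ ∑ m ∈ Finset.range (h+1), J^h := by
          refine Finset.sum_le_sum fun m hm => ?_
          rw [Finset.card_powersetCard, Finset.card_univ, Fintype.card_fin]
          calc J.choose m ≤ J^m := Nat.choose_le_pow J m
            _ ≤ J^h := Nat.pow_le_pow_right hJ (Nat.lt_succ_iff.mp (Finset.mem_range.mp hm))
      _ = (h+1) * J^h := by rw [Finset.sum_const, Finset.card_range, smul_eq_mul]
  calc S.card ≤ ∑ A ∈ T, (Fintype.piFinset (fun _ : Fin n => A)).card := h1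
    _ ≤ ∑ _A ∈ T, h^n := Finset.sum_le_sum h2
    _ = T.card * h^n := by rw [Finset.sum_const, smul_eq_mul]
    _ ≤ ((h+1) * J^h) * h^n := Nat.mul_le_mul_right _ h3

/-- Product of independent integrable random variables is integrable, with
product integral. -/
lemma iIndep_prod_integral {Ω : Type*} [MeasureSpace Ω] [IsProbabilityMeasure (ℙ : Measure Ω)]
    {J : ℕ} (g : Fin J → Ω → ℝ) (hm : ∀ j, Measurable (g j))
    (hind : iIndepFun g ℙ) (hint : ∀ j, Integrable (g j) ℙ)
    (s : Finset (Fin J)) :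
    Integrable (fun ω => ∏ j ∈ s, g j ω) ℙ ∧
      (∫ ω, ∏ j ∈ s, g j ω) = ∏ j ∈ s, ∫ ω, g j ω := by
  classical
  induction s using Finset.induction with
  | empty => simp
  | @insert i s hi ih =>
    have hfun : (fun ω => ∏ j ∈ s, g j ω) = ∏ j ∈ s, g j := by
      funext ω; rw [Finset.prod_apply]
    have hdep : IndepFun (∏ j ∈ s, g j) (g i) ℙ :=
      iIndepFun.indepFun_finset_prod_of_notMem hind hm hi
    have hint' : Integrable (fun ω => (∏ j ∈ s, g j) ω * g i ω) ℙ :=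
      hdep.integrable_mul (hfun ▸ ih.1) (hint i)
    have heq : (fun ω => ∏ j ∈ insert i s, g j ω)
        = fun ω => (∏ j ∈ s, g j) ω * g i ω := by
      funext ω
      rw [Finset.prod_insert hi, Finset.prod_apply, mul_comm]
    constructor
    · rw [heq]; exact hint'
    · rw [heq]
      have := hdep.integral_fun_mul_eq_mul_integral (hfun ▸ ih.1).aestronglyMeasurable (hint i).aestronglyMeasurable
      calc (∫ ω, (∏ j ∈ s, g j) ω * g i ω) = (∫ ω, (∏ j ∈ s, g j) ω) * ∫ ω, g i ω := this
        _ = ∏ j ∈ insert i s, ∫ ω, g j ω := by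
            rw [Finset.prod_insert hi, ← hfun, ih.2, mul_comm]

/-- Marcinkiewicz–Zygmund-type bound for the `n`-th moment of a sum of independent
centered random variables. -/
lemma MZ_bound {Ω : Type*} [MeasureSpace Ω] [IsProbabilityMeasure (ℙ : Measure Ω)]
    {J : ℕ} (hJ : 1 ≤ J) (Y : Fin J → Ω → ℝ) (hm : ∀ j, Measurable (Y j))
    (hind : iIndepFun Y ℙ)
    (n : ℕ) (hn2 : 2 ≤ n)
    (hint : ∀ j (c : ℕ), c ≤ n → Integrable (fun ω => (Y j ω)^c) ℙ)
    (hcent : ∀ j, (∫ ω, Y j ω) = 0)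
    (M : ℝ) (hM1 : 1 ≤ M) (hMom : ∀ j (c : ℕ), c ≤ n → |∫ ω, (Y j ω)^c| ≤ M) :
    Integrable (fun ω => (∑ j, Y j ω)^n) ℙ ∧
      (∫ ω, (∑ j, Y j ω)^n) ≤ ((n:ℝ)+1) * (n:ℝ)^n * M^n * (J:ℝ)^(n/2) := by
  classical
  set h : ℕ := n/2 with hh
  have hM0 : (0:ℝ) ≤ M := le_trans zero_le_one hM1
  -- fiber cardinalities
  set cf : (Fin n → Fin J) → Fin J → ℕ :=
    fun f j => (Finset.univ.filter (fun k => f k = j)).card with hcf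
  have hcf_le : ∀ f j, cf f j ≤ n := by
    intro f j
    calc cf f j ≤ (Finset.univ : Finset (Fin n)).card := Finset.card_filter_le _ _
      _ = n := by rw [Finset.card_univ, Fintype.card_fin]
  -- pointwise expansion
  have hexp : ∀ ω, (∑ j, Y j ω)^n = ∑ f : Fin n → Fin J, ∏ k, Y (f k) ω := by
    intro ω
    have h1 : (∑ j, Y j ω)^n = ∏ _k : Fin n, (∑ j, Y j ω) := by
      rw [Finset.prod_const, Finset.card_univ, Fintype.card_fin]
    rw [h1, Finset.prod_univ_sum]
    rw [Fintype.piFinset_univ]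
  -- rewrite each term as a product over the image
  have hprod : ∀ (f : Fin n → Fin J) ω,
      (∏ k, Y (f k) ω) = ∏ j ∈ Finset.univ.image f, (Y j ω)^(cf f j) := by
    intro f ω
    exact Finset.prod_comp (fun j => Y j ω) f
  -- independence of powers
  have hpows : ∀ f : Fin n → Fin J,
      Integrable (fun ω => ∏ k, Y (f k) ω) ℙ ∧
      (∫ ω, ∏ k, Y (f k) ω) = ∏ j ∈ Finset.univ.image f, (∫ ω, (Y j ω)^(cf f j)) := by
    intro f
    have hmg : ∀ j, Measurable (fun ω => (Y j ω)^(cf f j)) := fun j => (hm j).pow_const _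
    have hindg : iIndepFun (fun j ω => (Y j ω)^(cf f j)) ℙ := by
      have := hind.comp (fun j => fun x : ℝ => x ^ (cf f j))
        (fun j => measurable_id.pow_const _)
      exact this
    have hig : ∀ j, Integrable (fun ω => (Y j ω)^(cf f j)) ℙ :=
      fun j => hint j _ (hcf_le f j)
    obtain ⟨hI, hE⟩ := iIndep_prod_integral _ hmg hindg hig (Finset.univ.image f)
    constructor
    · refine hI.congr ?_
      exact Filter.Eventually.of_forall fun ω => (hprod f ω).symm
    · rw [show (fun ω => ∏ k, Y (f k) ω) = fun ω => ∏ j ∈ Finset.univ.image f, (Y j ω)^(cf f j)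
        from funext fun ω => hprod f ω]
      exact hE
  -- integrability of the full power
  have hIfull : Integrable (fun ω => (∑ j, Y j ω)^n) ℙ := by
    rw [show (fun ω => (∑ j, Y j ω)^n) = fun ω => ∑ f : Fin n → Fin J, ∏ k, Y (f k) ω
      from funext hexp]
    exact integrable_finset_sum _ (fun f _ => (hpows f).1)
  refine ⟨hIfull, ?_⟩
  -- compute the integral
  have hIntEq : (∫ ω, (∑ j, Y j ω)^n)
      = ∑ f : Fin n → Fin J, ∏ j ∈ Finset.univ.image f, (∫ ω, (Y j ω)^(cf f j)) := by
    rw [show (fun ω => (∑ j, Y j ω)^n) = fun ω => ∑ f : Fin n → Fin J, ∏ k, Y (f k) ω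
      from funext hexp]
    rw [integral_finset_sum _ (fun f _ => (hpows f).1)]
    exact Finset.sum_congr rfl fun f _ => (hpows f).2
  set term : (Fin n → Fin J) → ℝ :=
    fun f => ∏ j ∈ Finset.univ.image f, (∫ ω, (Y j ω)^(cf f j)) with hterm
  -- terms with a large image vanish
  have hvanish : ∀ f : Fin n → Fin J, ¬ ((Finset.univ.image f).card ≤ h) → term f = 0 := by
    intro f hf
    -- some fiber has cardinality exactly one
    have hex : ∃ j ∈ Finset.univ.image f, cf f j = 1 := by
      by_contra hcon
      push_neg at hcon
      have h2 : ∀ j ∈ Finset.univ.image f, 2 ≤ cf f j := by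
        intro j hj
        have h1 : 1 ≤ cf f j := by
          rw [hcf]
          refine Finset.card_pos.2 ?_
          obtain ⟨k, _, hk⟩ := Finset.mem_image.1 hj
          exact ⟨k, Finset.mem_filter.2 ⟨Finset.mem_univ k, hk⟩⟩
        have hne := hcon j hj
        omega
      have hsum : (Finset.univ : Finset (Fin n)).card
          = ∑ j ∈ Finset.univ.image f, cf f j := by
        rw [hcf]
        exact Finset.card_eq_sum_card_fiberwise
          (fun k _ => Finset.mem_image_of_mem f (Finset.mem_univ k))
      have hge : 2 * (Finset.univ.image f).card ≤ n := by
        calc 2 * (Finset.univ.image f).card = ∑ _j ∈ Finset.univ.image f, 2 := by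
              rw [Finset.sum_const, smul_eq_mul, mul_comm]
          _ ≤ ∑ j ∈ Finset.univ.image f, cf f j := Finset.sum_le_sum h2
          _ = n := by rw [← hsum, Finset.card_univ, Fintype.card_fin]
      omega
    obtain ⟨j, hjmem, hj1⟩ := hex
    refine Finset.prod_eq_zero hjmem ?_
    rw [hj1]
    simp only [pow_one]
    exact hcent j
  -- terms with a small image are bounded
  have habs : ∀ f : Fin n → Fin J, |term f| ≤ M^n := by
    intro f
    rw [hterm]
    calc |∏ j ∈ Finset.univ.image f, (∫ ω, (Y j ω)^(cf f j))|
        = ∏ j ∈ Finset.univ.image f, |∫ ω, (Y j ω)^(cf f j)| := Finset.abs_prod _ _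
      _ ≤ ∏ _j ∈ Finset.univ.image f, M :=
          Finset.prod_le_prod (fun _ _ => abs_nonneg _)
            (fun j _ => hMom j _ (hcf_le f j))
      _ = M ^ (Finset.univ.image f).card := by rw [Finset.prod_const]
      _ ≤ M ^ n := pow_le_pow_right₀ hM1 (by
          calc (Finset.univ.image f).card ≤ (Finset.univ : Finset (Fin n)).card :=
                Finset.card_image_le
            _ = n := by rw [Finset.card_univ, Fintype.card_fin])
  -- assemble
  set S := Finset.univ.filter
      (fun f : Fin n → Fin J => (Finset.univ.image f).card ≤ h) with hSdef
  have hsum_eq : ∑ f : Fin n → Fin J, term f = ∑ f ∈ S, term f := by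
    rw [hSdef]
    exact (Finset.sum_filter_of_ne (fun f _ hne => by
      by_contra hc
      exact hne (hvanish f hc))).symm
  have hcard : (S.card : ℝ) ≤ ((n:ℝ)+1) * (n:ℝ)^n * (J:ℝ)^h := by
    have hc1 : S.card ≤ (h+1) * J^h * h^n := card_small_image_le n J h hJ
    have hc2 : (h+1) * J^h * h^n ≤ (n+1) * J^h * n^n := by
      have h1 : h + 1 ≤ n + 1 := by omega
      have h2 : h^n ≤ n^n := Nat.pow_le_pow_left (by omega) n
      exact Nat.mul_le_mul (Nat.mul_le_mul_right _ h1) h2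
    calc (S.card : ℝ) ≤ (((n+1) * J^h * n^n : ℕ) : ℝ) := by
          exact_mod_cast le_trans hc1 hc2
      _ = ((n:ℝ)+1) * (J:ℝ)^h * (n:ℝ)^n := by push_cast; ring
      _ = ((n:ℝ)+1) * (n:ℝ)^n * (J:ℝ)^h := by ring
  calc (∫ ω, (∑ j, Y j ω)^n) = ∑ f ∈ S, term f := by rw [hIntEq, hsum_eq]
    _ ≤ ∑ f ∈ S, |term f| := Finset.sum_le_sum fun f _ => le_abs_self _
    _ ≤ ∑ _f ∈ S, M^n := Finset.sum_le_sum fun f _ => habs f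
    _ = (S.card : ℝ) * M^n := by rw [Finset.sum_const, nsmul_eq_mul]
    _ ≤ (((n:ℝ)+1) * (n:ℝ)^n * (J:ℝ)^h) * M^n := by
        exact mul_le_mul_of_nonneg_right hcard (pow_nonneg hM0 n)
    _ = ((n:ℝ)+1) * (n:ℝ)^n * M^n * (J:ℝ)^(n/2) := by rw [hh]; ring

lemma euclNorm_nonneg' {n : ℕ} (v : Fin n → ℝ) : 0 ≤ euclNorm v := Real.sqrt_nonneg _

lemma measurable_euclNorm {n : ℕ} : Measurable (euclNorm (n := n)) := by
  apply Measurable.sqrt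
  unfold euclNorm2
  exact Finset.measurable_sum _ (fun i _ => (measurable_pi_apply i).pow_const 2)

lemma euclNorm_eq_zero_iff {n : ℕ} {v : Fin n → ℝ} : euclNorm v = 0 ↔ v = 0 := by
  unfold euclNorm euclNorm2
  rw [Real.sqrt_eq_zero (Finset.sum_nonneg fun i _ => sq_nonneg _)]
  constructor
  · intro h
    funext i
    have hi := (Finset.sum_eq_zero_iff_of_nonneg (fun i _ => sq_nonneg (v i))).1 h i
      (Finset.mem_univ i)
    have := sq_eq_zero_iff.1 hi
    simpa using this
  · intro h; rw [h]; simp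

section Density

variable {L : ℕ} {ρ : (Fin L → ℝ) → ℝ}

lemma rho_integrable (hρ1 : (∫ u : Fin L → ℝ, ρ u) = 1) : Integrable ρ (volume) := by
  by_contra hni
  rw [integral_undef hni] at hρ1
  exact one_ne_zero hρ1.symm

lemma volume_zero_singleton (hL : 1 ≤ L) : (volume : Measure (Fin L → ℝ)) {0} = 0 := by
  have h0 : ({0} : Set (Fin L → ℝ)) = Set.pi Set.univ (fun _ => ({0} : Set ℝ)) := by
    ext x
    simp [funext_iff, Set.mem_pi]
  rw [h0, volume_pi_pi]
  rw [show (fun _ : Fin L => volume ({0} : Set ℝ)) = fun _ => 0 from funext fun _ => by simp]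
  rw [Finset.prod_const]
  have : L ≠ 0 := by omega
  simp [this]

lemma rho_aemeasurable (hL : 1 ≤ L) (hρ0 : ∀ u, 0 ≤ ρ u)
    (hmom2 : Integrable (fun u : Fin L → ℝ => euclNorm u ^ (2:ℕ) * ρ u)) :
    AEMeasurable ρ (volume : Measure (Fin L → ℝ)) := by
  set g := fun u : Fin L → ℝ => euclNorm u ^ (2:ℕ) * ρ u with hg
  have hgm : AEMeasurable g volume := hmom2.aestronglyMeasurable.aemeasurable
  have hrm : AEMeasurable (fun u => (euclNorm u ^ (2:ℕ))⁻¹ * g u) volume :=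
    (measurable_euclNorm.pow_const 2).inv.aemeasurable.mul hgm
  refine hrm.congr ?_
  have h0 : ∀ᵐ u : Fin L → ℝ, u ≠ 0 := by
    rw [ae_iff]
    have : {u : Fin L → ℝ | ¬ u ≠ 0} = {0} := by ext u; simp
    rw [this]
    exact volume_zero_singleton hL
  filter_upwards [h0] with u hu
  have hepos : 0 < euclNorm u :=
    lt_of_le_of_ne (euclNorm_nonneg' u) (fun h => hu (euclNorm_eq_zero_iff.1 h.symm))
  have hne : (euclNorm u ^ (2:ℕ)) ≠ 0 := pow_ne_zero _ hepos.ne'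
  rw [hg]
  simp only
  rw [← mul_assoc, inv_mul_cancel₀ hne, one_mul]

/-- The density measure integral identity. -/
lemma dM_integral (hρ0 : ∀ u, 0 ≤ ρ u) (hae : AEMeasurable ρ (volume : Measure (Fin L → ℝ)))
    (g : (Fin L → ℝ) → ℝ) :
    (∫ x, g x ∂(densityMeasure L ρ)) = ∫ x, ρ x * g x := by
  have h1 : densityMeasure L ρ
      = volume.withDensity (fun u => ((ρ u).toNNReal : ENNReal)) := rfl
  rw [h1, integral_withDensity_eq_integral_smul₀
    (f := fun u => (ρ u).toNNReal) hae.real_toNNReal g]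
  congr 1
  funext x
  rw [NNReal.smul_def, smul_eq_mul, Real.coe_toNNReal _ (hρ0 x)]

lemma dM_prob (hρ0 : ∀ u, 0 ≤ ρ u) (hρ1 : (∫ u : Fin L → ℝ, ρ u) = 1) :
    IsProbabilityMeasure (densityMeasure L ρ) := by
  constructor
  rw [densityMeasure, withDensity_apply _ MeasurableSet.univ, Measure.restrict_univ]
  rw [← ofReal_integral_eq_lintegral_ofReal (rho_integrable hρ1)
    (Filter.Eventually.of_forall hρ0), hρ1]
  simp

lemma dM_integrable_iff (hρ0 : ∀ u, 0 ≤ ρ u)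
    (hae : AEMeasurable ρ (volume : Measure (Fin L → ℝ))) (g : (Fin L → ℝ) → ℝ) :
    Integrable g (densityMeasure L ρ) ↔ Integrable (fun x => ρ x * g x) volume := by
  have h1 : densityMeasure L ρ
      = volume.withDensity (fun u => ((ρ u).toNNReal : ENNReal)) := rfl
  rw [h1, integrable_withDensity_iff_integrable_smul₀
    (f := fun u => (ρ u).toNNReal) hae.real_toNNReal]
  constructor <;> intro h <;> refine h.congr (Filter.Eventually.of_forall fun x => ?_) <;>
    simp only [NNReal.smul_def, smul_eq_mul, Real.coe_toNNReal _ (hρ0 x)]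
end Density

lemma le_one_add_pow {x : ℝ} (hx : 0 ≤ x) {N : ℕ} (hN : 1 ≤ N) : x ≤ 1 + x^N := by
  rcases le_total x 1 with h | h
  · nlinarith [pow_nonneg hx N]
  · calc x = x^1 := (pow_one x).symm
      _ ≤ x^N := pow_le_pow_right₀ h hN
      _ ≤ 1 + x^N := by linarith

lemma one_add_pow_le {x : ℝ} (hx : 0 ≤ x) (N : ℕ) : (1+x)^N ≤ 2^N * (1 + x^N) := by
  rcases le_total x 1 with h | h
  · calc (1+x)^N ≤ 2^N := by
          apply pow_le_pow_left₀ (by linarith) (by linarith)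
      _ ≤ 2^N * (1 + x^N) := by
          nlinarith [pow_pos (show (0:ℝ) < 2 by norm_num) N, pow_nonneg hx N]
  · calc (1+x)^N ≤ (2*x)^N := by
          apply pow_le_pow_left₀ (by linarith) (by linarith)
      _ = 2^N * x^N := mul_pow 2 x N
      _ ≤ 2^N * (1 + x^N) := by
          nlinarith [pow_pos (show (0:ℝ) < 2 by norm_num) N, pow_nonneg hx N]

lemma pow_dom {x y A : ℝ} (hx : 0 ≤ x) (hA : 1 ≤ A) {c d Nn : ℕ} (hd : 1 ≤ d)
    (hdc : d*c ≤ Nn) (hy : |y| ≤ A * (1+x)^d) : |y^c| ≤ A^Nn * 2^Nn * (1 + x^Nn) := by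
  have h1x : (1:ℝ) ≤ 1 + x := by linarith
  calc |y^c| = |y|^c := (pow_abs y c).symm
    _ ≤ (A * (1+x)^d)^c := pow_le_pow_left₀ (abs_nonneg _) hy c
    _ = A^c * (1+x)^(d*c) := by rw [mul_pow, ← pow_mul]
    _ ≤ A^Nn * (1+x)^Nn := by
        apply mul_le_mul (pow_le_pow_right₀ hA (le_trans (Nat.le_mul_of_pos_left c hd) hdc))
          (pow_le_pow_right₀ h1x hdc) (pow_nonneg (by linarith) _) (pow_nonneg (by linarith) _)
    _ ≤ A^Nn * (2^Nn * (1 + x^Nn)) := by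
        apply mul_le_mul_of_nonneg_left (one_add_pow_le hx Nn) (pow_nonneg (by linarith) _)
    _ = A^Nn * 2^Nn * (1 + x^Nn) := by ring

lemma cov_identity' {J : ℕ} (hJ : 1 ≤ J) (a b : Fin J → ℝ) (ma mb : ℝ) :
    (1/(J:ℝ)) * ∑ j, (a j - (1/(J:ℝ)) * ∑ k, a k) * (b j - (1/(J:ℝ)) * ∑ k, b k)
      = (1/(J:ℝ)) * (∑ j, (a j - ma) * (b j - mb))
        - ((1/(J:ℝ)) * ∑ j, (a j - ma)) * ((1/(J:ℝ)) * ∑ j, (b j - mb)) := by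
  have hJ0 : (J:ℝ) ≠ 0 := by positivity
  have e1 : ∀ c d : ℝ, ∑ j, (a j - c) * (b j - d)
      = (∑ j, a j * b j) - c * (∑ j, b j) - d * (∑ j, a j) + (J:ℝ) * (c*d) := by
    intro c d
    calc ∑ j, (a j - c) * (b j - d)
        = ∑ j, (a j * b j - c * b j - d * a j + c * d) :=
          Finset.sum_congr rfl (fun j _ => by ring)
      _ = (∑ j, a j * b j) - c * (∑ j, b j) - d * (∑ j, a j) + (J:ℝ) * (c*d) := by
          rw [Finset.sum_add_distrib, Finset.sum_sub_distrib, Finset.sum_sub_distrib,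
            ← Finset.mul_sum, ← Finset.mul_sum, Finset.sum_const, Finset.card_univ,
            Fintype.card_fin, nsmul_eq_mul]
  have e2 : ∑ j, (a j - ma) = (∑ j, a j) - (J:ℝ) * ma := by
    rw [Finset.sum_sub_distrib, Finset.sum_const, Finset.card_univ, Fintype.card_fin,
      nsmul_eq_mul]
  have e3 : ∑ j, (b j - mb) = (∑ j, b j) - (J:ℝ) * mb := by
    rw [Finset.sum_sub_distrib, Finset.sum_const, Finset.card_univ, Fintype.card_fin,
      nsmul_eq_mul]
  rw [e1, e1, e2, e3]
  field_simp
  ring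

end AuxiliaryLemmas

/-- If `ρ` has finite moments of every order `q ≥ 2`, then for every
even integer `p ≥ 2` there is a constant `C` (independent of `J`) such that whenever
`v¹, …, v^J` are i.i.d. with law `ρ`, `(E ‖Cov_v − Cov_ρ‖₂^p)^{1/p} ≤ C J^{−1/2}`. -/
theorem sample_cov_moment_bound
    {Ω : Type*} [MeasureSpace Ω] [IsProbabilityMeasure (ℙ : Measure Ω)]
    (L : ℕ) (hL : 1 ≤ L) (ρ : (Fin L → ℝ) → ℝ)
    (hρ0 : ∀ u, 0 ≤ ρ u) (hρ1 : (∫ u : Fin L → ℝ, ρ u) = 1)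
    (hmom : ∀ q : ℝ, 2 ≤ q → Integrable (fun u : Fin L → ℝ => euclNorm u ^ q * ρ u))
    (p : ℕ) (hp : Even p) (hp2 : 2 ≤ p) :
    ∃ C : ℝ, ∀ J : ℕ, 1 ≤ J → ∀ v : Fin J → Ω → Fin L → ℝ,
      IsIIDSample L J ρ v →
      (∫ ω, specNorm (sampleCov L J (fun j => v j ω) - densCov L ρ) ^ p)
        ^ ((1 : ℝ) / p) ≤ C * (J : ℝ) ^ (-(1 : ℝ) / 2) := by
  classical
  obtain ⟨r, hr⟩ := hp
  have hr1 : 1 ≤ r := by omega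
  -- ρ facts
  have hρint : Integrable ρ (volume : Measure (Fin L → ℝ)) := rho_integrable hρ1
  have hmom' : ∀ Nq : ℕ, 2 ≤ Nq →
      Integrable (fun u : Fin L → ℝ => euclNorm u ^ Nq * ρ u) volume := by
    intro Nq hNq
    have h2 : (2:ℝ) ≤ (Nq:ℝ) := by exact_mod_cast hNq
    refine (hmom (Nq:ℝ) h2).congr (Filter.Eventually.of_forall fun u => ?_)
    show euclNorm u ^ ((Nq:ℕ):ℝ) * ρ u = euclNorm u ^ Nq * ρ u
    rw [Real.rpow_natCast]
  have hae : AEMeasurable ρ (volume : Measure (Fin L → ℝ)) :=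
    rho_aemeasurable hL hρ0 (hmom' 2 le_rfl)
  set ν := densityMeasure L ρ with hν
  haveI hprob : IsProbabilityMeasure ν := dM_prob hρ0 hρ1
  set N : ℕ := 2*p with hNdef
  have hNint : Integrable (fun x => 1 + euclNorm x ^ N) ν := by
    rw [hν, dM_integrable_iff hρ0 hae]
    have h1 : (fun x : Fin L → ℝ => ρ x * (1 + euclNorm x ^ N))
        = fun x => ρ x + euclNorm x ^ N * ρ x := by funext x; ring
    rw [h1]
    exact hρint.add (hmom' N (by omega))
  set κ := ∫ x, (1 + euclNorm x ^ N) ∂ν with hκdef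
  have hκ0 : 0 ≤ κ :=
    integral_nonneg fun x => add_nonneg zero_le_one (pow_nonneg (euclNorm_nonneg' x) N)
  -- domination machinery
  have hdom : ∀ (g : (Fin L → ℝ) → ℝ) (K : ℝ), 0 ≤ K → Measurable g →
      (∀ u, |g u| ≤ K * (1 + euclNorm u ^ N)) →
      Integrable g ν ∧ |∫ x, g x ∂ν| ≤ K * κ := by
    intro g K hK hgm hb
    have hKint : Integrable (fun x => K * (1 + euclNorm x ^ N)) ν := hNint.const_mul K
    have hint : Integrable g ν :=
      hKint.mono' hgm.aestronglyMeasurable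
        (Filter.Eventually.of_forall fun x => by rw [Real.norm_eq_abs]; exact hb x)
    refine ⟨hint, ?_⟩
    have h0 : |∫ x, g x ∂ν| ≤ ∫ x, ‖g x‖ ∂ν := by
      rw [← Real.norm_eq_abs]; exact norm_integral_le_integral_norm g
    calc |∫ x, g x ∂ν| ≤ ∫ x, ‖g x‖ ∂ν := h0
      _ ≤ ∫ x, K * (1 + euclNorm x ^ N) ∂ν := by
          refine integral_mono_of_nonneg (Filter.Eventually.of_forall fun x => norm_nonneg _)
            hKint (Filter.Eventually.of_forall fun x => ?_)
          show ‖g x‖ ≤ K * (1 + euclNorm x ^ N)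
          rw [Real.norm_eq_abs]; exact hb x
      _ = K * κ := by rw [MeasureTheory.integral_const_mul, hκdef]
  -- constants
  set μm := densMean L ρ with hμm
  set Cv := densCov L ρ with hCv
  set Bm : ℝ := ∑ i, |μm i| with hBm
  set BC : ℝ := ∑ i, ∑ i', |Cv i i'| with hBCdef
  have hBm0 : 0 ≤ Bm := Finset.sum_nonneg fun _ _ => abs_nonneg _
  have hBC0 : 0 ≤ BC :=
    Finset.sum_nonneg fun _ _ => Finset.sum_nonneg fun _ _ => abs_nonneg _
  have hBmi : ∀ i, |μm i| ≤ Bm := fun i =>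
    Finset.single_le_sum (f := fun i => |μm i|) (fun _ _ => abs_nonneg _) (Finset.mem_univ i)
  have hBCi : ∀ i i', |Cv i i'| ≤ BC := by
    intro i i'
    calc |Cv i i'| ≤ ∑ i'', |Cv i i''| :=
          Finset.single_le_sum (f := fun i'' => |Cv i i''|) (fun _ _ => abs_nonneg _)
            (Finset.mem_univ i')
      _ ≤ BC := Finset.single_le_sum (f := fun i => ∑ i'', |Cv i i''|)
            (fun _ _ => Finset.sum_nonneg fun _ _ => abs_nonneg _) (Finset.mem_univ i)
  set KW : ℝ := 1 + Bm with hKW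
  set KZ : ℝ := 1 + 2*Bm + Bm^2 + BC with hKZ
  set Mc : ℝ := KW + KZ with hMc
  have hMc1 : 1 ≤ Mc := by rw [hMc, hKW, hKZ]; nlinarith
  set Kbig : ℝ := Mc^N * 2^N with hKbigdef
  have hKbig0 : 0 ≤ Kbig := by positivity
  set M : ℝ := 1 + Kbig * κ with hMdef
  have hM1 : 1 ≤ M := by nlinarith [mul_nonneg hKbig0 hκ0]
  -- base functions
  set Wf : Fin L → (Fin L → ℝ) → ℝ := fun i u => u i - μm i with hWf
  set Zf : Fin L → Fin L → (Fin L → ℝ) → ℝ :=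
    fun i i' u => Wf i u * Wf i' u - Cv i i' with hZf
  have hWfm : ∀ i, Measurable (Wf i) := fun i =>
    (measurable_pi_apply i).sub measurable_const
  have hZfm : ∀ i i', Measurable (Zf i i') := fun i i' =>
    ((hWfm i).mul (hWfm i')).sub measurable_const
  have hWb : ∀ i u, |Wf i u| ≤ Mc * (1 + euclNorm u)^1 := by
    intro i u
    have h1 : |u i| ≤ euclNorm u := abs_apply_le_euclNorm u i
    have h2 := hBmi i
    have h3 := euclNorm_nonneg' u
    have h4 : |Wf i u| ≤ |u i| + |μm i| := by
      rw [hWf]; simp only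
      rw [sub_eq_add_neg]
      exact (abs_add_le _ _).trans (by rw [abs_neg])
    rw [pow_one, hMc, hKW, hKZ]
    nlinarith
  have hZb : ∀ i i' u, |Zf i i' u| ≤ Mc * (1 + euclNorm u)^2 := by
    intro i i' u
    have h1 := hWb i u
    have h2 := hWb i' u
    have h3 := hBCi i i'
    have h4 := euclNorm_nonneg' u
    have h5 : |Zf i i' u| ≤ |Wf i u| * |Wf i' u| + |Cv i i'| := by
      rw [hZf]; simp only
      rw [sub_eq_add_neg]
      refine (abs_add_le _ _).trans ?_
      rw [abs_neg, abs_mul]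
    have h6 : |Wf i u| * |Wf i' u| ≤ (KW * (1 + euclNorm u)) * (KW * (1 + euclNorm u)) := by
      rw [pow_one] at h1 h2
      have hKWb : ∀ j, |Wf j u| ≤ KW * (1 + euclNorm u) := by
        intro j
        have h1' : |u j| ≤ euclNorm u := abs_apply_le_euclNorm u j
        have h2' := hBmi j
        have h4' : |Wf j u| ≤ |u j| + |μm j| := by
          rw [hWf]; simp only
          rw [sub_eq_add_neg]
          exact (abs_add_le _ _).trans (by rw [abs_neg])
        rw [hKW]; nlinarith
      have hKW0 : (0:ℝ) ≤ KW := by rw [hKW]; linarith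
      exact mul_le_mul (hKWb i) (hKWb i') (abs_nonneg _) (mul_nonneg hKW0 (by linarith))
    have hsq1 : (1:ℝ) ≤ (1 + euclNorm u)^2 := by nlinarith
    rw [hKW] at h6
    rw [hMc, hKW, hKZ]
    nlinarith [abs_nonneg (Wf i u), abs_nonneg (Wf i' u), sq_nonneg (1 + euclNorm u),
      mul_nonneg hBm0 h4]
  -- uniform moment bounds over ν
  have hWpow : ∀ i (c : ℕ), c ≤ N →
      Integrable (fun u => (Wf i u)^c) ν ∧ |∫ u, (Wf i u)^c ∂ν| ≤ M := by
    intro i c hc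
    have hb : ∀ u, |(Wf i u)^c| ≤ Kbig * (1 + euclNorm u ^ N) := by
      intro u
      rw [hKbigdef]
      exact pow_dom (euclNorm_nonneg' u) hMc1 le_rfl (by omega) (hWb i u)
    have := hdom (fun u => (Wf i u)^c) Kbig hKbig0 ((hWfm i).pow_const c) hb
    refine ⟨this.1, le_trans this.2 ?_⟩
    rw [hMdef]; nlinarith [mul_nonneg hKbig0 hκ0]
  have hZpow : ∀ i i' (c : ℕ), c ≤ p →
      Integrable (fun u => (Zf i i' u)^c) ν ∧ |∫ u, (Zf i i' u)^c ∂ν| ≤ M := by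
    intro i i' c hc
    have hb : ∀ u, |(Zf i i' u)^c| ≤ Kbig * (1 + euclNorm u ^ N) := by
      intro u
      rw [hKbigdef]
      exact pow_dom (euclNorm_nonneg' u) hMc1 (by omega : 1 ≤ 2) (by omega) (hZb i i' u)
    have := hdom (fun u => (Zf i i' u)^c) Kbig hKbig0 ((hZfm i i').pow_const c) hb
    refine ⟨this.1, le_trans this.2 ?_⟩
    rw [hMdef]; nlinarith [mul_nonneg hKbig0 hκ0]
  -- centering
  have hWcent : ∀ i, (∫ u, Wf i u ∂ν) = 0 := by
    intro i
    have hui : Integrable (fun u : Fin L → ℝ => u i) ν := by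
      refine (hdom (fun u => u i) 1 zero_le_one (measurable_pi_apply i) fun u => ?_).1
      rw [one_mul]
      exact le_trans (abs_apply_le_euclNorm u i)
        (le_one_add_pow (euclNorm_nonneg' u) (by omega))
    have h1 : (∫ u, Wf i u ∂ν) = (∫ u : Fin L → ℝ, u i ∂ν) - μm i := by
      rw [hWf]; simp only
      rw [integral_sub hui (integrable_const _)]
      simp
    rw [h1, hν, dM_integral hρ0 hae]
    have h2 : (∫ x : Fin L → ℝ, ρ x * x i) = μm i := by
      rw [show (fun x : Fin L → ℝ => ρ x * x i) = fun x => x i * ρ x from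
        funext fun x => mul_comm _ _]
      rw [hμm]; rfl
    rw [h2, sub_self]
  have hZcent : ∀ i i', (∫ u, Zf i i' u ∂ν) = 0 := by
    intro i i'
    have hWW : Integrable (fun u => Wf i u * Wf i' u) ν := by
      have h1 := (hZpow i i' 1 (by omega)).1
      have h2 : (fun u => Wf i u * Wf i' u)
          = fun u => (Zf i i' u)^1 + Cv i i' := by
        funext u; rw [hZf]; simp only; ring
      rw [h2]
      exact h1.add (integrable_const _)
    have h1 : (∫ u, Zf i i' u ∂ν) = (∫ u, Wf i u * Wf i' u ∂ν) - Cv i i' := by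
      rw [hZf]; simp only
      rw [integral_sub hWW (integrable_const _)]
      simp
    rw [h1, hν, dM_integral hρ0 hae]
    have h2 : (∫ x, ρ x * (Wf i x * Wf i' x)) = Cv i i' := by
      rw [show (fun x : Fin L → ℝ => ρ x * (Wf i x * Wf i' x))
          = fun u => (u i - densMean L ρ i) * (u i' - densMean L ρ i') * ρ u from
        funext fun u => by rw [hWf]; simp only; rw [hμm]; ring]
      rw [hCv]; rfl
    rw [h2, sub_self]
  -- MZ constants
  set CZ : ℝ := ((p:ℝ)+1) * (p:ℝ)^p * M^p with hCZdef
  set CW : ℝ := (((2*p:ℕ):ℝ)+1) * ((2*p:ℕ):ℝ)^(2*p) * M^(2*p) with hCWdef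
  have hCZ0 : 0 ≤ CZ := by rw [hCZdef]; positivity
  have hCW0 : 0 ≤ CW := by rw [hCWdef]; positivity
  set Call : ℝ := ((L:ℝ)*(L:ℝ))^(p-1) * (2:ℝ)^(p-1) * ((L:ℝ)*(L:ℝ)) * (CZ + CW)
    with hCalldef
  have hCall0 : 0 ≤ Call := by rw [hCalldef]; positivity
  refine ⟨Call ^ ((1:ℝ)/p), ?_⟩
  intro J hJ v hIID
  obtain ⟨hvmeas, hvindep, hvlaw⟩ := hIID
  have hJpos : (0:ℝ) < (J:ℝ) := by exact_mod_cast hJ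
  have hJne : (J:ℝ) ≠ 0 := ne_of_gt hJpos
  -- transfer lemmas
  have htrans_int : ∀ (g : (Fin L → ℝ) → ℝ), Measurable g → Integrable g ν →
      ∀ j, Integrable (fun ω => g (v j ω)) ℙ := by
    intro g hg hgi j
    have h1 : Integrable g (Measure.map (v j) ℙ) := by rw [hvlaw j]; exact hgi
    exact (integrable_map_measure hg.aestronglyMeasurable (hvmeas j).aemeasurable).1 h1
  have htrans_eq : ∀ (g : (Fin L → ℝ) → ℝ), Measurable g →
      ∀ j, (∫ ω, g (v j ω)) = ∫ x, g x ∂ν := by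
    intro g hg j
    rw [hν, ← hvlaw j]
    exact (integral_map (hvmeas j).aemeasurable hg.aestronglyMeasurable).symm
  -- MZ applications
  have hMZW : ∀ i : Fin L,
      Integrable (fun ω => (∑ j, Wf i (v j ω))^(2*p)) ℙ ∧
      (∫ ω, (∑ j, Wf i (v j ω))^(2*p)) ≤ CW * (J:ℝ)^p := by
    intro i
    have h := MZ_bound hJ (fun j ω => Wf i (v j ω))
      (fun j => (hWfm i).comp (hvmeas j))
      (hvindep.comp (fun _ => Wf i) (fun _ => hWfm i))
      (2*p) (by omega)
      (fun j c hc => htrans_int (fun u => (Wf i u)^c) ((hWfm i).pow_const c)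
        (hWpow i c (by omega : c ≤ N)).1 j)
      (fun j => by
        rw [htrans_eq (Wf i) (hWfm i) j]; exact hWcent i)
      M hM1
      (fun j c hc => by
        rw [htrans_eq (fun u => (Wf i u)^c) ((hWfm i).pow_const c) j]
        exact (hWpow i c (by omega : c ≤ N)).2)
    refine ⟨h.1, le_trans h.2 ?_⟩
    rw [hCWdef]
    have h2 : (2*p)/2 = p := by omega
    rw [h2]
  have hMZZ : ∀ i i' : Fin L,
      Integrable (fun ω => (∑ j, Zf i i' (v j ω))^p) ℙ ∧
      (∫ ω, (∑ j, Zf i i' (v j ω))^p) ≤ CZ * (J:ℝ)^(p/2) := by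
    intro i i'
    have h := MZ_bound hJ (fun j ω => Zf i i' (v j ω))
      (fun j => (hZfm i i').comp (hvmeas j))
      (hvindep.comp (fun _ => Zf i i') (fun _ => hZfm i i'))
      p hp2
      (fun j c hc => htrans_int (fun u => (Zf i i' u)^c) ((hZfm i i').pow_const c)
        (hZpow i i' c hc).1 j)
      (fun j => by
        rw [htrans_eq (Zf i i') (hZfm i i') j]; exact hZcent i i')
      M hM1
      (fun j c hc => by
        rw [htrans_eq (fun u => (Zf i i' u)^c) ((hZfm i i').pow_const c) j]
        exact (hZpow i i' c hc).2)
    exact ⟨h.1, h.2⟩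
  -- sample averages
  set T : Fin L → Ω → ℝ := fun i ω => (1/(J:ℝ)) * ∑ j, Wf i (v j ω) with hT
  set U : Fin L → Fin L → Ω → ℝ :=
    fun i i' ω => (1/(J:ℝ)) * ∑ j, Zf i i' (v j ω) with hU
  -- entrywise identity
  have hentry : ∀ (ω : Ω) (i i' : Fin L),
      (sampleCov L J (fun j => v j ω) - densCov L ρ) i i'
        = U i i' ω - T i ω * T i' ω := by
    intro ω i i'
    rw [Matrix.sub_apply]
    have h1 : sampleCov L J (fun j => v j ω) i i'
        = (1/(J:ℝ)) * ∑ j, ((fun j => v j ω i) j - (1/(J:ℝ)) * ∑ k, (fun k => v k ω i) k)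
            * ((fun j => v j ω i') j - (1/(J:ℝ)) * ∑ k, (fun k => v k ω i') k) := rfl
    rw [h1, cov_identity' hJ (fun j => v j ω i) (fun j => v j ω i') (μm i) (μm i')]
    have h2 : ∑ j, ((fun j => v j ω i) j - μm i) * ((fun j => v j ω i') j - μm i')
        = (∑ j, Zf i i' (v j ω)) + (J:ℝ) * Cv i i' := by
      rw [show (fun j : Fin J => ((fun j => v j ω i) j - μm i) * ((fun j => v j ω i') j - μm i'))
          = fun j => Zf i i' (v j ω) + Cv i i' from funext fun j => by
            rw [hZf]; simp only; rw [hWf]; simp only; ring]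
      rw [Finset.sum_add_distrib, Finset.sum_const, Finset.card_univ, Fintype.card_fin,
        nsmul_eq_mul]
    have h3 : ∑ j, ((fun j => v j ω i) j - μm i) = ∑ j, Wf i (v j ω) := by
      refine Finset.sum_congr rfl fun j _ => ?_
      rw [hWf]
    have h3' : ∑ j, ((fun j => v j ω i') j - μm i') = ∑ j, Wf i' (v j ω) := by
      refine Finset.sum_congr rfl fun j _ => ?_
      rw [hWf]
    rw [h2, h3, h3', ← hCv, hU, hT]
    simp only
    field_simp
    ring
  -- pointwise bound by an integrable function
  set G : Ω → ℝ := fun ω => ((L:ℝ)*(L:ℝ))^(p-1) * ∑ q : Fin L × Fin L, (2:ℝ)^(p-1) *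
      ((U q.1 q.2 ω)^p + ((T q.1 ω)^(2*p) + (T q.2 ω)^(2*p))/2) with hG
  have hpoint : ∀ ω, specNorm (sampleCov L J (fun j => v j ω) - densCov L ρ) ^ p ≤ G ω := by
    intro ω
    set D := sampleCov L J (fun j => v j ω) - densCov L ρ with hD
    have hstep1 : specNorm D ≤ ∑ q : Fin L × Fin L, |D q.1 q.2| := by
      calc specNorm D ≤ ∑ i, ∑ i', |D i i'| := specNorm_le_sum_abs D
        _ = ∑ q : Fin L × Fin L, |D q.1 q.2| :=
          (Fintype.sum_prod_type (f := fun q : Fin L × Fin L => |D q.1 q.2|)).symm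
    obtain ⟨m, hm⟩ : ∃ m, p = m + 1 := ⟨p - 1, by omega⟩
    have hcard : ((Finset.univ : Finset (Fin L × Fin L)).card : ℝ) = (L:ℝ)*(L:ℝ) := by
      rw [Finset.card_univ, Fintype.card_prod, Fintype.card_fin]
      push_cast; ring
    have hcardpos : (0:ℝ) < ((Finset.univ : Finset (Fin L × Fin L)).card : ℝ) := by
      rw [hcard]
      have : (1:ℝ) ≤ (L:ℝ) := by exact_mod_cast hL
      nlinarith
    have hstep2 : specNorm D ^ p
        ≤ ((L:ℝ)*(L:ℝ))^(p-1) * ∑ q : Fin L × Fin L, |D q.1 q.2|^p := by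
      have ha : specNorm D ^ p ≤ (∑ q : Fin L × Fin L, |D q.1 q.2|)^p :=
        pow_le_pow_left₀ (specNorm_nonneg _) hstep1 p
      have hb := pow_sum_div_card_le_sum_pow (s := (Finset.univ : Finset (Fin L × Fin L)))
        (f := fun q => |D q.1 q.2|) (fun q _ => abs_nonneg _) m
      rw [div_le_iff₀ (pow_pos hcardpos m)] at hb
      calc specNorm D ^ p ≤ (∑ q : Fin L × Fin L, |D q.1 q.2|)^p := ha
        _ = (∑ q : Fin L × Fin L, |D q.1 q.2|)^(m+1) := by rw [← hm]
        _ ≤ (∑ q : Fin L × Fin L, |D q.1 q.2|^(m+1))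
              * ((Finset.univ : Finset (Fin L × Fin L)).card : ℝ)^m := hb
        _ = ((L:ℝ)*(L:ℝ))^(p-1) * ∑ q : Fin L × Fin L, |D q.1 q.2|^p := by
            rw [hcard, ← hm, show p - 1 = m from by omega]
            ring
    have hstep3 : ∀ q : Fin L × Fin L, |D q.1 q.2|^p
        ≤ (2:ℝ)^(p-1) * ((U q.1 q.2 ω)^p + ((T q.1 ω)^(2*p) + (T q.2 ω)^(2*p))/2) := by
      intro q
      have hd : D q.1 q.2 = U q.1 q.2 ω - T q.1 ω * T q.2 ω := by
        rw [hD]; exact hentry ω q.1 q.2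
      have h1 : |D q.1 q.2| ≤ |U q.1 q.2 ω| + |T q.1 ω * T q.2 ω| := by
        rw [hd, sub_eq_add_neg]
        exact (abs_add_le _ _).trans (by rw [abs_neg])
      have h2 : |D q.1 q.2|^p ≤ (|U q.1 q.2 ω| + |T q.1 ω * T q.2 ω|)^p :=
        pow_le_pow_left₀ (abs_nonneg _) h1 p
      have h3 : (|U q.1 q.2 ω| + |T q.1 ω * T q.2 ω|)^p
          ≤ 2^(p-1) * (|U q.1 q.2 ω|^p + |T q.1 ω * T q.2 ω|^p) :=
        add_pow_le (abs_nonneg _) (abs_nonneg _) p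
      have h4 : |U q.1 q.2 ω|^p = (U q.1 q.2 ω)^p := Even.pow_abs ⟨r, hr⟩ _
      have h5 : |T q.1 ω * T q.2 ω|^p ≤ ((T q.1 ω)^(2*p) + (T q.2 ω)^(2*p))/2 := by
        rw [abs_mul, mul_pow]
        have h6' := two_mul_le_add_sq (|T q.1 ω|^p) (|T q.2 ω|^p)
        have h6 : |T q.1 ω|^p * |T q.2 ω|^p
            ≤ ((|T q.1 ω|^p)^2 + (|T q.2 ω|^p)^2)/2 := by linarith
        have h7 : ∀ x : ℝ, (|x|^p)^2 = x^(2*p) := by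
          intro x
          rw [← pow_mul, mul_comm p 2]
          exact (even_two_mul p).pow_abs x
        rw [h7, h7] at h6
        exact h6
      calc |D q.1 q.2|^p ≤ 2^(p-1) * (|U q.1 q.2 ω|^p + |T q.1 ω * T q.2 ω|^p) :=
            le_trans h2 h3
        _ ≤ (2:ℝ)^(p-1) * ((U q.1 q.2 ω)^p + ((T q.1 ω)^(2*p) + (T q.2 ω)^(2*p))/2) := by
            rw [h4]
            refine mul_le_mul_of_nonneg_left (add_le_add_right h5 _) (by positivity)
    calc specNorm D ^ p
        ≤ ((L:ℝ)*(L:ℝ))^(p-1) * ∑ q : Fin L × Fin L, |D q.1 q.2|^p := hstep2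
      _ ≤ G ω := by
          rw [hG]
          simp only
          refine mul_le_mul_of_nonneg_left (Finset.sum_le_sum fun q _ => hstep3 q) ?_
          positivity
  -- integrability of the summands
  have hUint : ∀ i i', Integrable (fun ω => (U i i' ω)^p) ℙ := by
    intro i i'
    have heq : (fun ω => (U i i' ω)^p)
        = fun ω => ((1/(J:ℝ))^p) * (∑ j, Zf i i' (v j ω))^p := by
      funext ω; rw [hU]; simp only; rw [mul_pow]
    rw [heq]
    exact ((hMZZ i i').1).const_mul _
  have hTint : ∀ i, Integrable (fun ω => (T i ω)^(2*p)) ℙ := by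
    intro i
    have heq : (fun ω => (T i ω)^(2*p))
        = fun ω => ((1/(J:ℝ))^(2*p)) * (∑ j, Wf i (v j ω))^(2*p) := by
      funext ω; rw [hT]; simp only; rw [mul_pow]
    rw [heq]
    exact ((hMZW i).1).const_mul _
  have hGint : Integrable G ℙ := by
    rw [hG]
    apply Integrable.const_mul
    apply integrable_finset_sum
    intro q _
    apply Integrable.const_mul
    exact (hUint q.1 q.2).add (((hTint q.1).add (hTint q.2)).div_const 2)
  -- integral bounds for the summands
  have hUbound : ∀ i i', (∫ ω, (U i i' ω)^p) ≤ CZ / (J:ℝ)^(p/2) := by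
    intro i i'
    have heq : (fun ω => (U i i' ω)^p)
        = fun ω => ((1/(J:ℝ))^p) * (∑ j, Zf i i' (v j ω))^p := by
      funext ω; rw [hU]; simp only; rw [mul_pow]
    rw [heq, MeasureTheory.integral_const_mul]
    have hb := (hMZZ i i').2
    have hscale : ((1/(J:ℝ))^p) * (CZ * (J:ℝ)^(p/2)) = CZ / (J:ℝ)^(p/2) := by
      have hp2' : p/2 = r := by omega
      rw [hp2', hr, pow_add]
      field_simp
      rw [mul_right_comm, ← mul_pow, ← mul_pow, one_div, inv_mul_cancel₀ hJne, one_pow, one_pow, one_mul]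
    calc ((1/(J:ℝ))^p) * (∫ ω, (∑ j, Zf i i' (v j ω))^p)
        ≤ ((1/(J:ℝ))^p) * (CZ * (J:ℝ)^(p/2)) := by
          refine mul_le_mul_of_nonneg_left hb (by positivity)
      _ = CZ / (J:ℝ)^(p/2) := hscale
  have hTbound : ∀ i, (∫ ω, (T i ω)^(2*p)) ≤ CW / (J:ℝ)^(p/2) := by
    intro i
    have heq : (fun ω => (T i ω)^(2*p))
        = fun ω => ((1/(J:ℝ))^(2*p)) * (∑ j, Wf i (v j ω))^(2*p) := by
      funext ω; rw [hT]; simp only; rw [mul_pow]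
    rw [heq, MeasureTheory.integral_const_mul]
    have hb := (hMZW i).2
    have hscale : ((1/(J:ℝ))^(2*p)) * (CW * (J:ℝ)^p) = CW / (J:ℝ)^p := by
      rw [two_mul, pow_add]
      field_simp
      rw [mul_right_comm, ← mul_pow, ← mul_pow, one_div, inv_mul_cancel₀ hJne, one_pow, one_pow, one_mul]
    have hJ1 : (1:ℝ) ≤ (J:ℝ) := by exact_mod_cast hJ
    calc ((1/(J:ℝ))^(2*p)) * (∫ ω, (∑ j, Wf i (v j ω))^(2*p))
        ≤ ((1/(J:ℝ))^(2*p)) * (CW * (J:ℝ)^p) := by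
          refine mul_le_mul_of_nonneg_left hb (by positivity)
      _ = CW / (J:ℝ)^p := hscale
      _ ≤ CW / (J:ℝ)^(p/2) := by
          exact div_le_div_of_nonneg_left hCW0 (pow_pos hJpos _)
            (pow_le_pow_right₀ hJ1 (by omega))
  -- combine everything
  have hIle : (∫ ω, specNorm (sampleCov L J (fun j => v j ω) - densCov L ρ) ^ p)
      ≤ ∫ ω, G ω :=
    integral_mono_of_nonneg
      (Filter.Eventually.of_forall fun ω => pow_nonneg (specNorm_nonneg _) p)
      hGint (Filter.Eventually.of_forall hpoint)
  have hGval : (∫ ω, G ω) ≤ Call / (J:ℝ)^(p/2) := by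
    have hterm_int : ∀ q ∈ (Finset.univ : Finset (Fin L × Fin L)),
        Integrable (fun ω => (2:ℝ)^(p-1) *
          ((U q.1 q.2 ω)^p + ((T q.1 ω)^(2*p) + (T q.2 ω)^(2*p))/2)) ℙ :=
      fun q _ => Integrable.const_mul
        ((hUint q.1 q.2).add (((hTint q.1).add (hTint q.2)).div_const 2)) _
    calc (∫ ω, G ω) = ((L:ℝ)*(L:ℝ))^(p-1) * ∑ q : Fin L × Fin L, (2:ℝ)^(p-1) *
          ((∫ ω, (U q.1 q.2 ω)^p)
            + ((∫ ω, (T q.1 ω)^(2*p)) + (∫ ω, (T q.2 ω)^(2*p)))/2) := by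
          simp only [hG]
          rw [MeasureTheory.integral_const_mul, integral_finset_sum _ hterm_int]
          congr 1
          refine Finset.sum_congr rfl fun q _ => ?_
          have hginteg : Integrable (fun ω => ((T q.1 ω)^(2*p) + (T q.2 ω)^(2*p))/2) ℙ :=
            ((hTint q.1).add (hTint q.2)).div_const 2
          have hadd2 : Integrable (fun ω => (T q.1 ω)^(2*p) + (T q.2 ω)^(2*p)) ℙ :=
            (hTint q.1).add (hTint q.2)
          rw [MeasureTheory.integral_const_mul,
            integral_add (hUint q.1 q.2) hginteg,
            integral_div, integral_add (hTint q.1) (hTint q.2)]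
      _ ≤ ((L:ℝ)*(L:ℝ))^(p-1) * ∑ _q : Fin L × Fin L,
            (2:ℝ)^(p-1) * ((CZ + CW) / (J:ℝ)^(p/2)) := by
          refine mul_le_mul_of_nonneg_left (Finset.sum_le_sum fun q _ => ?_) (by positivity)
          refine mul_le_mul_of_nonneg_left ?_ (by positivity)
          have hx : (CZ + CW) / (J:ℝ)^(p/2)
              = CZ/(J:ℝ)^(p/2) + (CW/(J:ℝ)^(p/2) + CW/(J:ℝ)^(p/2))/2 := by ring
          rw [hx]
          have hb1 := hUbound q.1 q.2
          have hb2 := hTbound q.1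
          have hb3 := hTbound q.2
          linarith
      _ = Call / (J:ℝ)^(p/2) := by
          rw [Finset.sum_const, Finset.card_univ, Fintype.card_prod, Fintype.card_fin,
            nsmul_eq_mul, hCalldef]
          push_cast
          ring
  have h0 : 0 ≤ (∫ ω, specNorm (sampleCov L J (fun j => v j ω) - densCov L ρ) ^ p) :=
    integral_nonneg fun ω => pow_nonneg (specNorm_nonneg _) p
  have hrp := Real.rpow_le_rpow h0 (le_trans hIle hGval)
    (by positivity : (0:ℝ) ≤ 1/(p:ℝ))
  refine le_trans hrp ?_
  have hhalfpos : (0:ℝ) < (J:ℝ)^(p/2) := pow_pos hJpos _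
  rw [Real.div_rpow hCall0 (le_of_lt hhalfpos)]
  have hden : ((J:ℝ)^(p/2)) ^ ((1:ℝ)/p) = (J:ℝ) ^ ((1:ℝ)/2) := by
    rw [← Real.rpow_natCast (J:ℝ) (p/2), ← Real.rpow_mul (le_of_lt hJpos)]
    congr 1
    rw [show p/2 = r from by omega]
    have hpr : (p:ℝ) = 2*(r:ℝ) := by rw [hr]; push_cast; ring
    rw [hpr]
    have hr0 : (r:ℝ) ≠ 0 := by
      have : (1:ℝ) ≤ (r:ℝ) := by exact_mod_cast hr1
      linarith
    field_simp
  rw [hden, div_eq_mul_inv, ← Real.rpow_neg (le_of_lt hJpos)]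
  have hexp : -((1:ℝ)/2) = -(1:ℝ)/2 := by norm_num
  rw [hexp]

end
end

section
/- The normalization Z is differentiable on [0,∞) and for every t ≥ 0, Z'(t)/Z(t) = −(1/2) Tr( Cov_{μ_t} Aᵀ Γ^{-1} A ) − (1/2) (u† − E_{μ_t})ᵀ Aᵀ Γ^{-1} A (u† − E_{μ_t}). -/
open MeasureTheory Real Set Matrix

noncomputable section

/-- The Gaussian density on `ℝ^L` with mean `m` and covariance matrix `S`. -/
def gaussDensity (L : ℕ) (m : Fin L → ℝ) (S : Matrix (Fin L) (Fin L) ℝ)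
    (u : Fin L → ℝ) : ℝ :=
  (2 * π) ^ (-(L : ℝ) / 2) * S.det ^ (-(1 : ℝ) / 2) *
    Real.exp (-(1 / 2) *
      dotProduct (fun i => u i - m i) (S⁻¹.mulVec (fun i => u i - m i)))

/-- The loss `Φ(u) = ½ (u† − u)ᵀ Aᵀ Γ⁻¹ A (u† − u)` (with data `y = A u†`). -/
def lossPhi (K L : ℕ) (A : Matrix (Fin K) (Fin L) ℝ) (Γ : Matrix (Fin K) (Fin K) ℝ)
    (udag : Fin L → ℝ) (u : Fin L → ℝ) : ℝ :=
  (1 / 2) * dotProduct (fun i => udag i - u i)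
    ((Aᵀ * Γ⁻¹ * A).mulVec (fun i => udag i - u i))

/-- The normalization `Z(t) = ∫ exp(−t Φ(u)) μ₀(u) du`, where `μ₀` is the Gaussian
density with mean `u₀` and covariance `Γ₀`. -/
def ekiZ (K L : ℕ) (A : Matrix (Fin K) (Fin L) ℝ) (Γ : Matrix (Fin K) (Fin K) ℝ)
    (Γ₀ : Matrix (Fin L) (Fin L) ℝ) (u₀ udag : Fin L → ℝ) (t : ℝ) : ℝ :=
  ∫ u : Fin L → ℝ, Real.exp (-t * lossPhi K L A Γ udag u) * gaussDensity L u₀ Γ₀ u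

/-- The interpolating density `μ(t,u) = exp(−t Φ(u)) μ₀(u) / Z(t)`. -/
def ekiMu (K L : ℕ) (A : Matrix (Fin K) (Fin L) ℝ) (Γ : Matrix (Fin K) (Fin K) ℝ)
    (Γ₀ : Matrix (Fin L) (Fin L) ℝ) (u₀ udag : Fin L → ℝ) (t : ℝ)
    (u : Fin L → ℝ) : ℝ :=
  Real.exp (-t * lossPhi K L A Γ udag u) * gaussDensity L u₀ Γ₀ u
    / ekiZ K L A Γ Γ₀ u₀ udag t

/-! Differentiating `Z(t) = ∫ exp(-tΦ) μ₀` under the integral sign gives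
`Z'(t) = -∫ Φ exp(-tΦ) μ₀ = -Z(t) E_{μ_t}[Φ]`, and the bias–variance decomposition
`E[(a - u)ᵀ B (a - u)] = Tr(Cov B) + (a - E u)ᵀ B (a - E u)` evaluates this expectation.
Differentiation under the integral is justified, also slightly to the left of `t = 0`, by a
Gaussian majorant: `0 ≤ Φ(u) ≤ C (1 + |u|²)`, while `μ₀(u) ≤ C' exp(-b |u|²)` by coercivity of
`Γ₀⁻¹`, so `exp(-sΦ) μ₀` is still dominated by a Gaussian for `s > -b / (2C)`; polynomial weights
are absorbed through `(1 + x) exp(-bx) ≤ (1 + 2/b) exp(-bx/2)`. -/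

section SumsOfSquares

variable {ι : Type*} [Fintype ι]

theorem sq_le_sum_sq (u : ι → ℝ) (l : ι) : u l ^ 2 ≤ ∑ k, u k ^ 2 :=
  Finset.single_le_sum (f := fun k => u k ^ 2) (fun _ _ => sq_nonneg _) (Finset.mem_univ l)

theorem sum_add_sq_le {x y : ι → ℝ} :
    ∑ i, (x i + y i) ^ 2 ≤ 2 * ∑ i, x i ^ 2 + 2 * ∑ i, y i ^ 2 := by
  rw [Finset.mul_sum, Finset.mul_sum, ← Finset.sum_add_distrib]
  exact Finset.sum_le_sum fun i _ => by nlinarith [sq_nonneg (x i - y i)]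

end SumsOfSquares

section GaussianIntegrability

variable {ι : Type*} [Fintype ι]

theorem integrable_exp_neg_mul_sum_sq {b : ℝ} (hb : 0 < b) :
    Integrable fun u : ι → ℝ => exp (-b * ∑ i, u i ^ 2) := by
  have h := Integrable.fintype_prod (μ := fun _ : ι => (volume : Measure ℝ))
    (f := fun _ x => exp (-b * x ^ 2)) fun _ => integrable_exp_neg_mul_sq hb
  refine (h.congr (Filter.Eventually.of_forall fun u => ?_))
  simp only [Finset.mul_sum, Real.exp_sum]

theorem one_add_mul_exp_neg_mul_le {b x : ℝ} (hb : 0 < b) (hx : 0 ≤ x) :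
    (1 + x) * exp (-b * x) ≤ (1 + 2 / b) * exp (-(b / 2) * x) := by
  have hpoly : 1 + x ≤ (1 + 2 / b) * (1 + b / 2 * x) := by
    field_simp
    nlinarith [mul_nonneg (mul_nonneg hx hb.le) hb.le]
  calc (1 + x) * exp (-b * x) ≤ (1 + 2 / b) * exp (b / 2 * x) * exp (-b * x) := by
        gcongr
        exact hpoly.trans (by gcongr; linarith [add_one_le_exp (b / 2 * x)])
    _ = (1 + 2 / b) * exp (-(b / 2) * x) := by
        rw [mul_assoc, ← Real.exp_add]; ring_nf

theorem integrable_one_add_sum_sq_mul_exp_neg_mul_sum_sq {b : ℝ} (hb : 0 < b) :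
    Integrable fun u : ι → ℝ => (1 + ∑ i, u i ^ 2) * exp (-b * ∑ i, u i ^ 2) := by
  refine ((integrable_exp_neg_mul_sum_sq (half_pos hb)).const_mul (1 + 2 / b)).mono'
    (by fun_prop) (Filter.Eventually.of_forall fun u => ?_)
  rw [Real.norm_of_nonneg (by positivity)]
  exact one_add_mul_exp_neg_mul_le hb (by positivity)

end GaussianIntegrability

section QuadraticForms

variable {ι : Type*} [Fintype ι]

theorem dotProduct_mulVec_eq_sum_sum (M : Matrix ι ι ℝ) (v : ι → ℝ) :
    v ⬝ᵥ M *ᵥ v = ∑ i, ∑ j, M i j * (v i * v j) := by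
  simp only [dotProduct, Matrix.mulVec, Finset.mul_sum]
  exact Finset.sum_congr rfl fun i _ => Finset.sum_congr rfl fun j _ => by ring

theorem dotProduct_mulVec_le_sum_abs_mul_sum_sq (M : Matrix ι ι ℝ) (v : ι → ℝ) :
    v ⬝ᵥ M *ᵥ v ≤ (∑ i, ∑ j, |M i j|) * ∑ k, v k ^ 2 := by
  have hcoord : ∀ i j, M i j * (v i * v j) ≤ |M i j| * ∑ k, v k ^ 2 := fun i j => by
    have hvv : |v i * v j| ≤ ∑ k, v k ^ 2 := by
      rw [abs_mul]
      nlinarith [sq_le_sum_sq v i, sq_le_sum_sq v j, sq_nonneg (|v i| - |v j|), sq_abs (v i),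
        sq_abs (v j)]
    calc M i j * (v i * v j) ≤ |M i j| * |v i * v j| := (le_abs_self _).trans_eq (abs_mul _ _)
      _ ≤ |M i j| * ∑ k, v k ^ 2 := by gcongr
  calc v ⬝ᵥ M *ᵥ v = ∑ i, ∑ j, M i j * (v i * v j) := dotProduct_mulVec_eq_sum_sum M v
    _ ≤ ∑ i, ∑ j, |M i j| * ∑ k, v k ^ 2 :=
        Finset.sum_le_sum fun i _ => Finset.sum_le_sum fun j _ => hcoord i j
    _ = (∑ i, ∑ j, |M i j|) * ∑ k, v k ^ 2 := by simp only [Finset.sum_mul]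

theorem Matrix.PosDef.exists_pos_mul_sum_sq_le {M : Matrix ι ι ℝ} (hM : M.PosDef) :
    ∃ c > 0, ∀ v : ι → ℝ, c * ∑ i, v i ^ 2 ≤ v ⬝ᵥ M *ᵥ v := by
  rcases isEmpty_or_nonempty ι with hι | hι
  · exact ⟨1, one_pos, fun v => by simp⟩
  set f : EuclideanSpace ℝ ι → ℝ := fun x => x.ofLp ⬝ᵥ M *ᵥ x.ofLp
  obtain ⟨w, hw, hmin⟩ := (isCompact_sphere (0 : EuclideanSpace ℝ ι) 1).exists_isMinOn
    (NormedSpace.sphere_nonempty.mpr zero_le_one) (by fun_prop : Continuous f).continuousOn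
  have hw0 : w.ofLp ≠ 0 := by
    rw [ne_eq, WithLp.ofLp_eq_zero]; rintro rfl; simp at hw
  refine ⟨f w, hM.dotProduct_mulVec_pos hw0, fun v => ?_⟩
  rcases eq_or_ne v 0 with rfl | hv
  · simp
  set x := WithLp.toLp 2 v
  have hr : 0 < ‖x‖ := norm_pos_iff.mpr (by simpa [x] using hv)
  have hnorm : ‖x‖ ^ 2 = ∑ i, v i ^ 2 := by simp [x, EuclideanSpace.real_norm_sq_eq]
  have hscale : f (‖x‖⁻¹ • x) = ‖x‖⁻¹ ^ 2 * (v ⬝ᵥ M *ᵥ v) := by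
    simp only [f, x, WithLp.ofLp_smul, Matrix.mulVec_smul, smul_dotProduct, dotProduct_smul,
      smul_eq_mul]
    ring
  have hsphere : ‖x‖⁻¹ • x ∈ Metric.sphere (0 : EuclideanSpace ℝ ι) 1 := by
    simp [norm_smul, hr.ne']
  have hle : f w ≤ f (‖x‖⁻¹ • x) := hmin hsphere
  rw [hscale] at hle
  rw [← hnorm]
  calc f w * ‖x‖ ^ 2 ≤ ‖x‖⁻¹ ^ 2 * (v ⬝ᵥ M *ᵥ v) * ‖x‖ ^ 2 := by gcongr
    _ = v ⬝ᵥ M *ᵥ v := by field_simp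

end QuadraticForms

theorem sub_mul_sub_mul_eq (c d x y r : ℝ) :
    (c - x) * (d - y) * r = c * d * r - c * (y * r) - d * (x * r) + x * y * r := by
  ring

section Moments

variable {ι : Type*} [Fintype ι] {ρ : (ι → ℝ) → ℝ}

theorem MeasureTheory.Integrable.mul_of_abs_le_one_add_sum_sq
    (hρ : Integrable fun u => (1 + ∑ i, u i ^ 2) * ρ u) {p : (ι → ℝ) → ℝ}
    (hp : Continuous p) {M : ℝ} (hpM : ∀ u, |p u| ≤ M * (1 + ∑ i, u i ^ 2)) :
    Integrable fun u => p u * ρ u := by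
  have hpos : ∀ u : ι → ℝ, 0 < 1 + ∑ i, u i ^ 2 := fun u => by positivity
  refine (hρ.bdd_mul (c := M) (f := fun u => p u / (1 + ∑ i, u i ^ 2))
    (hp.div (by fun_prop) fun u => (hpos u).ne').aestronglyMeasurable
    (Filter.Eventually.of_forall fun u => ?_)).congr (Filter.Eventually.of_forall fun u => ?_)
  · rw [Real.norm_eq_abs, abs_div, abs_of_pos (hpos u), div_le_iff₀ (hpos u)]
    exact hpM u
  · field_simp [(hpos u).ne']

theorem MeasureTheory.Integrable.of_one_add_sum_sq_mul
    (hρ : Integrable fun u => (1 + ∑ i, u i ^ 2) * ρ u) : Integrable ρ := by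
  have := hρ.mul_of_abs_le_one_add_sum_sq (p := fun _ => 1) continuous_const (M := 1)
    fun u => by rw [abs_one, one_mul]; exact le_add_of_nonneg_right (by positivity)
  simpa using this

theorem MeasureTheory.Integrable.coord_mul_of_one_add_sum_sq_mul
    (hρ : Integrable fun u => (1 + ∑ i, u i ^ 2) * ρ u) (l : ι) :
    Integrable fun u => u l * ρ u :=
  hρ.mul_of_abs_le_one_add_sum_sq (continuous_apply l) (M := 1) fun u => by
    nlinarith [sq_le_sum_sq u l, sq_nonneg (|u l| - 1), sq_abs (u l)]

theorem MeasureTheory.Integrable.coord_mul_coord_mul_of_one_add_sum_sq_mul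
    (hρ : Integrable fun u => (1 + ∑ i, u i ^ 2) * ρ u) (i j : ι) :
    Integrable fun u => u i * u j * ρ u :=
  hρ.mul_of_abs_le_one_add_sum_sq (by fun_prop) (M := 1) fun u => by
    rw [abs_mul]
    nlinarith [sq_le_sum_sq u i, sq_le_sum_sq u j, sq_nonneg (|u i| - |u j|), sq_abs (u i),
      sq_abs (u j)]

theorem MeasureTheory.Integrable.sub_mul_sub_mul_of_one_add_sum_sq_mul
    (hρ : Integrable fun u => (1 + ∑ i, u i ^ 2) * ρ u) (c d : ℝ) (i j : ι) :
    Integrable fun u => (c - u i) * (d - u j) * ρ u := by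
  simp only [sub_mul_sub_mul_eq]
  exact ((((hρ.of_one_add_sum_sq_mul).const_mul _).sub
    ((hρ.coord_mul_of_one_add_sum_sq_mul j).const_mul _)).sub
    ((hρ.coord_mul_of_one_add_sum_sq_mul i).const_mul _)).add
    (hρ.coord_mul_coord_mul_of_one_add_sum_sq_mul i j)

theorem integral_sub_mul_sub_mul (hρ : Integrable fun u => (1 + ∑ i, u i ^ 2) * ρ u)
    (c d : ℝ) (i j : ι) :
    ∫ u, (c - u i) * (d - u j) * ρ u
      = c * d * (∫ u, ρ u) - c * (∫ u, u j * ρ u) - d * (∫ u, u i * ρ u)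
        + ∫ u, u i * u j * ρ u := by
  have h0 := hρ.of_one_add_sum_sq_mul
  have h1 := hρ.coord_mul_of_one_add_sum_sq_mul
  simp only [sub_mul_sub_mul_eq]
  rw [integral_add ?_ (hρ.coord_mul_coord_mul_of_one_add_sum_sq_mul i j),
    integral_sub ?_ ((h1 i).const_mul _), integral_sub (h0.const_mul _) ((h1 j).const_mul _),
    integral_const_mul, integral_const_mul, integral_const_mul]
  · exact (h0.const_mul _).sub ((h1 j).const_mul _)
  · exact ((h0.const_mul _).sub ((h1 j).const_mul _)).sub ((h1 i).const_mul _)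

end Moments

section DensityMoments

variable {L : ℕ} {ρ : (Fin L → ℝ) → ℝ}

theorem densCov_comm (i j : Fin L) :
    densCov L ρ i j = densCov L ρ j i := by
  simp only [densCov, Matrix.of_apply, mul_comm (_ - densMean L ρ i)]

theorem integral_sub_mul_sub_mul_eq_densCov_add
    (hρ : Integrable fun u => (1 + ∑ i, u i ^ 2) * ρ u) (hρ₁ : ∫ u, ρ u = 1)
    (a : Fin L → ℝ) (i j : Fin L) :
    ∫ u, (a i - u i) * (a j - u j) * ρ u
      = densCov L ρ i j + (a i - densMean L ρ i) * (a j - densMean L ρ j) := by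
  have hcov : densCov L ρ i j
      = ∫ u, (densMean L ρ i - u i) * (densMean L ρ j - u j) * ρ u := by
    simp only [densCov, Matrix.of_apply]
    congr 1 with u
    ring
  have hmean : ∀ l, densMean L ρ l = ∫ u, u l * ρ u := fun _ => rfl
  rw [hcov, integral_sub_mul_sub_mul hρ, integral_sub_mul_sub_mul hρ, hρ₁, hmean i, hmean j]
  ring

theorem trace_densCov_mul (B : Matrix (Fin L) (Fin L) ℝ) :
    Matrix.trace (densCov L ρ * B) = ∑ i, ∑ j, B i j * densCov L ρ i j := by
  simp only [Matrix.trace, Matrix.diag, Matrix.mul_apply]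
  rw [Finset.sum_comm]
  exact Finset.sum_congr rfl fun i _ => Finset.sum_congr rfl fun j _ => by
    rw [densCov_comm, mul_comm]

theorem integral_dotProduct_mulVec_mul_eq
    (hρ : Integrable fun u => (1 + ∑ i, u i ^ 2) * ρ u) (hρ₁ : ∫ u, ρ u = 1)
    (B : Matrix (Fin L) (Fin L) ℝ) (a : Fin L → ℝ) :
    ∫ u, (a - u) ⬝ᵥ B *ᵥ (a - u) * ρ u
      = Matrix.trace (densCov L ρ * B) + (a - densMean L ρ) ⬝ᵥ B *ᵥ (a - densMean L ρ) := by
  have hint := hρ.sub_mul_sub_mul_of_one_add_sum_sq_mul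
  calc ∫ u, (a - u) ⬝ᵥ B *ᵥ (a - u) * ρ u
      = ∫ u, ∑ i, ∑ j, B i j * ((a i - u i) * (a j - u j) * ρ u) := by
        congr 1 with u
        simp only [dotProduct_mulVec_eq_sum_sum, Finset.sum_mul, Pi.sub_apply, mul_assoc]
    _ = ∑ i, ∫ u, ∑ j, B i j * ((a i - u i) * (a j - u j) * ρ u) :=
        integral_finsetSum _ fun i _ =>
          integrable_finsetSum _ fun j _ => (hint (a i) (a j) i j).const_mul _
    _ = ∑ i, ∑ j, ∫ u, B i j * ((a i - u i) * (a j - u j) * ρ u) :=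
        Finset.sum_congr rfl fun i _ =>
          integral_finsetSum _ fun j _ => (hint (a i) (a j) i j).const_mul _
    _ = ∑ i, ∑ j, B i j * ∫ u, (a i - u i) * (a j - u j) * ρ u := by
        simp only [integral_const_mul]
    _ = _ := by
        simp only [integral_sub_mul_sub_mul_eq_densCov_add hρ hρ₁, mul_add,
          Finset.sum_add_distrib, trace_densCov_mul, dotProduct_mulVec_eq_sum_sum, Pi.sub_apply]

end DensityMoments

theorem hasDerivAt_integral_exp_neg_mul_mul {α : Type*} [MeasurableSpace α] {μ : Measure α}
    {φ g bound : α → ℝ} (hφ : AEStronglyMeasurable φ μ) (hg : AEStronglyMeasurable g μ)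
    {t ε : ℝ} (hε : 0 < ε) (hint : Integrable (fun u => exp (-t * φ u) * g u) μ)
    (hbound_int : Integrable bound μ)
    (hbound : ∀ s ∈ Metric.ball t ε, ∀ u, |φ u * (exp (-s * φ u) * g u)| ≤ bound u) :
    HasDerivAt (fun s => ∫ u, exp (-s * φ u) * g u ∂μ)
      (-∫ u, φ u * (exp (-t * φ u) * g u) ∂μ) t := by
  have hmeas : ∀ s : ℝ, AEStronglyMeasurable (fun u => exp (-s * φ u) * g u) μ := fun s =>
    (Real.continuous_exp.comp_aestronglyMeasurable (hφ.const_mul (-s))).mul hg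
  have hderiv : ∀ u, ∀ s : ℝ, HasDerivAt (fun s => exp (-s * φ u) * g u)
      (-(φ u * (exp (-s * φ u) * g u))) s := fun u s =>
    ((((hasDerivAt_neg s).mul_const (φ u)).exp).mul_const (g u)).congr_deriv (by ring)
  rw [← integral_neg]
  exact (hasDerivAt_integral_of_dominated_loc_of_deriv_le (Metric.ball_mem_nhds t hε)
    (Filter.Eventually.of_forall hmeas) hint (hφ.mul (hmeas t)).neg
    (Filter.Eventually.of_forall fun u s hs => by rw [norm_neg]; exact hbound s hs u)
    hbound_int (Filter.Eventually.of_forall fun u s _ => hderiv u s)).2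

section Model

variable {K L : ℕ} {A : Matrix (Fin K) (Fin L) ℝ} {Γ : Matrix (Fin K) (Fin K) ℝ}
  {Γ₀ : Matrix (Fin L) (Fin L) ℝ} {u₀ udag : Fin L → ℝ} {t : ℝ}

theorem lossPhi_eq (u : Fin L → ℝ) :
    lossPhi K L A Γ udag u = 1 / 2 * ((udag - u) ⬝ᵥ (Aᵀ * Γ⁻¹ * A) *ᵥ (udag - u)) :=
  rfl

@[fun_prop]
theorem continuous_lossPhi : Continuous (lossPhi K L A Γ udag) := by
  unfold lossPhi; fun_prop

@[fun_prop]
theorem continuous_gaussDensity : Continuous (gaussDensity L u₀ Γ₀) := by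
  unfold gaussDensity; fun_prop

theorem lossPhi_nonneg (hΓ : Γ.PosDef) (u : Fin L → ℝ) : 0 ≤ lossPhi K L A Γ udag u := by
  have hB : (Aᵀ * Γ⁻¹ * A).PosSemidef := by
    simpa using hΓ.inv.posSemidef.conjTranspose_mul_mul_same A
  have hform := hB.dotProduct_mulVec_nonneg (udag - u)
  rw [star_trivial] at hform
  exact mul_nonneg (by norm_num) hform

theorem exists_lossPhi_le :
    ∃ C > 0, ∀ u, lossPhi K L A Γ udag u ≤ C * (1 + ∑ i, u i ^ 2) := by
  set S := ∑ i, ∑ j, |(Aᵀ * Γ⁻¹ * A) i j|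
  have hS : 0 ≤ S := by positivity
  refine ⟨S * (1 + ∑ i, udag i ^ 2) + 1, by positivity, fun u => ?_⟩
  have hform := dotProduct_mulVec_le_sum_abs_mul_sum_sq (Aᵀ * Γ⁻¹ * A) (udag - u)
  have hsplit : ∑ i, (udag - u) i ^ 2 ≤ 2 * ∑ i, udag i ^ 2 + 2 * ∑ i, u i ^ 2 := by
    simpa [sub_eq_add_neg] using sum_add_sq_le (x := udag) (y := -u)
  have hq : 0 ≤ ∑ i, u i ^ 2 := by positivity
  have hqa : 0 ≤ ∑ i, udag i ^ 2 := by positivity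
  rw [lossPhi_eq]
  nlinarith [mul_le_mul_of_nonneg_left hsplit hS, mul_nonneg hS (mul_nonneg hqa hq)]

theorem gaussDensity_pos (hΓ₀ : Γ₀.PosDef) (u : Fin L → ℝ) : 0 < gaussDensity L u₀ Γ₀ u := by
  unfold gaussDensity
  have := hΓ₀.det_pos
  positivity

theorem exists_gaussDensity_le (hΓ₀ : Γ₀.PosDef) :
    ∃ C b, 0 < b ∧ ∀ u, gaussDensity L u₀ Γ₀ u ≤ C * exp (-b * ∑ i, u i ^ 2) := by
  obtain ⟨c, hc, hcoer⟩ := hΓ₀.inv.exists_pos_mul_sum_sq_le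
  set N := (2 * π) ^ (-(L : ℝ) / 2) * Γ₀.det ^ (-(1 : ℝ) / 2)
  have hN : 0 ≤ N := by have := hΓ₀.det_pos; positivity
  refine ⟨N * exp (c / 2 * ∑ i, u₀ i ^ 2), c / 4, by positivity, fun u => ?_⟩
  have hsplit : ∑ i, u i ^ 2 ≤ 2 * ∑ i, (u - u₀) i ^ 2 + 2 * ∑ i, u₀ i ^ 2 := by
    simpa using sum_add_sq_le (x := u - u₀) (y := u₀)
  have hexp : -(1 / 2) * ((u - u₀) ⬝ᵥ Γ₀⁻¹ *ᵥ (u - u₀))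
      ≤ c / 2 * ∑ i, u₀ i ^ 2 + -(c / 4) * ∑ i, u i ^ 2 := by
    nlinarith [hcoer (u - u₀), mul_le_mul_of_nonneg_left hsplit hc.le]
  calc gaussDensity L u₀ Γ₀ u = N * exp (-(1 / 2) * ((u - u₀) ⬝ᵥ Γ₀⁻¹ *ᵥ (u - u₀))) := rfl
    _ ≤ N * exp (c / 2 * ∑ i, u₀ i ^ 2 + -(c / 4) * ∑ i, u i ^ 2) := by gcongr
    _ = _ := by rw [Real.exp_add]; ring

theorem exists_exp_neg_mul_lossPhi_mul_gaussDensity_le (hΓ : Γ.PosDef) (hΓ₀ : Γ₀.PosDef) :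
    ∃ ε > 0, ∃ C b, 0 < b ∧ ∀ s, -ε < s → ∀ u,
      exp (-s * lossPhi K L A Γ udag u) * gaussDensity L u₀ Γ₀ u
        ≤ C * exp (-b * ∑ i, u i ^ 2) := by
  obtain ⟨C₀, hC₀, hΦ⟩ := exists_lossPhi_le (A := A) (Γ := Γ) (udag := udag)
  obtain ⟨C, b, hb, hg⟩ := exists_gaussDensity_le (u₀ := u₀) hΓ₀
  refine ⟨b / (2 * C₀), by positivity, C * exp (b / 2), b / 2, half_pos hb, fun s hs u => ?_⟩
  have hexp : -s * lossPhi K L A Γ udag u ≤ b / 2 + b / 2 * ∑ i, u i ^ 2 := by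
    have hΦ0 := lossPhi_nonneg (A := A) (udag := udag) hΓ u
    calc -s * lossPhi K L A Γ udag u ≤ b / (2 * C₀) * lossPhi K L A Γ udag u := by
          gcongr; linarith
      _ ≤ b / (2 * C₀) * (C₀ * (1 + ∑ i, u i ^ 2)) := by gcongr; exact hΦ u
      _ = b / 2 + b / 2 * ∑ i, u i ^ 2 := by field_simp
  calc exp (-s * lossPhi K L A Γ udag u) * gaussDensity L u₀ Γ₀ u
      ≤ exp (b / 2 + b / 2 * ∑ i, u i ^ 2) * (C * exp (-b * ∑ i, u i ^ 2)) := by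
        gcongr
        · exact (gaussDensity_pos hΓ₀ u).le
        · exact hg u
    _ = C * exp (b / 2) * exp (-(b / 2) * ∑ i, u i ^ 2) := by
        rw [mul_left_comm, mul_assoc, ← Real.exp_add, ← Real.exp_add]
        ring_nf

theorem integrable_one_add_sum_sq_mul_exp_neg_mul_lossPhi_mul_gaussDensity
    (hΓ : Γ.PosDef) (hΓ₀ : Γ₀.PosDef) (ht : 0 ≤ t) :
    Integrable fun u => (1 + ∑ i, u i ^ 2) *
      (exp (-t * lossPhi K L A Γ udag u) * gaussDensity L u₀ Γ₀ u) := by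
  obtain ⟨ε, hε, C, b, hb, hw⟩ :=
    exists_exp_neg_mul_lossPhi_mul_gaussDensity_le (A := A) (udag := udag) (u₀ := u₀) hΓ hΓ₀
  refine ((integrable_one_add_sum_sq_mul_exp_neg_mul_sum_sq hb).const_mul C).mono'
    (Continuous.aestronglyMeasurable (by fun_prop)) (Filter.Eventually.of_forall fun u => ?_)
  have hwu := hw t (by linarith) u
  have hg := (gaussDensity_pos (u := u) (u₀ := u₀) hΓ₀).le
  rw [Real.norm_of_nonneg (by positivity)]
  calc (1 + ∑ i, u i ^ 2) * (exp (-t * lossPhi K L A Γ udag u) * gaussDensity L u₀ Γ₀ u)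
      ≤ (1 + ∑ i, u i ^ 2) * (C * exp (-b * ∑ i, u i ^ 2)) := by gcongr
    _ = C * ((1 + ∑ i, u i ^ 2) * exp (-b * ∑ i, u i ^ 2)) := by ring

theorem ekiZ_pos (hΓ : Γ.PosDef) (hΓ₀ : Γ₀.PosDef) (ht : 0 ≤ t) :
    0 < ekiZ K L A Γ Γ₀ u₀ udag t :=
  integral_pos_of_integrable_nonneg_nonzero (x := 0) (by fun_prop)
    (integrable_one_add_sum_sq_mul_exp_neg_mul_lossPhi_mul_gaussDensity hΓ hΓ₀
      ht).of_one_add_sum_sq_mul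
    (fun u => (mul_pos (exp_pos _) (gaussDensity_pos hΓ₀ u)).le)
    (mul_pos (exp_pos _) (gaussDensity_pos hΓ₀ 0)).ne'

theorem integral_ekiMu (hΓ : Γ.PosDef) (hΓ₀ : Γ₀.PosDef) (ht : 0 ≤ t) :
    ∫ u, ekiMu K L A Γ Γ₀ u₀ udag t u = 1 := by
  simp only [ekiMu]
  rw [integral_div]
  exact div_self (ekiZ_pos hΓ hΓ₀ ht).ne'

theorem integrable_one_add_sum_sq_mul_ekiMu (hΓ : Γ.PosDef) (hΓ₀ : Γ₀.PosDef) (ht : 0 ≤ t) :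
    Integrable fun u => (1 + ∑ i, u i ^ 2) * ekiMu K L A Γ Γ₀ u₀ udag t u := by
  simp only [ekiMu, mul_div_assoc']
  exact (integrable_one_add_sum_sq_mul_exp_neg_mul_lossPhi_mul_gaussDensity hΓ hΓ₀ ht).div_const _

theorem hasDerivAt_ekiZ (hΓ : Γ.PosDef) (hΓ₀ : Γ₀.PosDef) (ht : 0 ≤ t) :
    HasDerivAt (ekiZ K L A Γ Γ₀ u₀ udag)
      (-∫ u, lossPhi K L A Γ udag u *
        (exp (-t * lossPhi K L A Γ udag u) * gaussDensity L u₀ Γ₀ u)) t := by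
  obtain ⟨ε, hε, C, b, hb, hw⟩ :=
    exists_exp_neg_mul_lossPhi_mul_gaussDensity_le (A := A) (udag := udag) (u₀ := u₀) hΓ hΓ₀
  obtain ⟨C₀, hC₀, hΦ⟩ := exists_lossPhi_le (A := A) (Γ := Γ) (udag := udag)
  refine hasDerivAt_integral_exp_neg_mul_mul (by fun_prop) (by fun_prop) hε
    (integrable_one_add_sum_sq_mul_exp_neg_mul_lossPhi_mul_gaussDensity hΓ hΓ₀
      ht).of_one_add_sum_sq_mul
    ((integrable_one_add_sum_sq_mul_exp_neg_mul_sum_sq hb).const_mul (C₀ * C))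
    fun s hs u => ?_
  have hs' : -ε < s := by linarith [(abs_lt.mp (Metric.mem_ball.mp hs)).1]
  have hΦ0 := lossPhi_nonneg (A := A) (udag := udag) hΓ u
  have hg := (gaussDensity_pos (u := u) (u₀ := u₀) hΓ₀).le
  rw [abs_of_nonneg (by positivity)]
  calc lossPhi K L A Γ udag u * (exp (-s * lossPhi K L A Γ udag u) * gaussDensity L u₀ Γ₀ u)
      ≤ C₀ * (1 + ∑ i, u i ^ 2) * (C * exp (-b * ∑ i, u i ^ 2)) := by
        exact mul_le_mul (hΦ u) (hw s hs' u) (by positivity) (by positivity)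
    _ = C₀ * C * ((1 + ∑ i, u i ^ 2) * exp (-b * ∑ i, u i ^ 2)) := by ring

theorem integral_lossPhi_mul_ekiMu (hΓ : Γ.PosDef) (hΓ₀ : Γ₀.PosDef) (ht : 0 ≤ t) :
    ∫ u, lossPhi K L A Γ udag u * ekiMu K L A Γ Γ₀ u₀ udag t u
      = 1 / 2 * Matrix.trace (densCov L (ekiMu K L A Γ Γ₀ u₀ udag t) * Aᵀ * Γ⁻¹ * A)
        + 1 / 2 * ((fun i => udag i - densMean L (ekiMu K L A Γ Γ₀ u₀ udag t) i) ⬝ᵥ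
          (Aᵀ * Γ⁻¹ * A) *ᵥ (fun i => udag i - densMean L (ekiMu K L A Γ Γ₀ u₀ udag t) i)) := by
  simp only [lossPhi_eq, mul_assoc]
  rw [integral_const_mul, integral_dotProduct_mulVec_mul_eq
    (integrable_one_add_sum_sq_mul_ekiMu hΓ hΓ₀ ht) (integral_ekiMu hΓ hΓ₀ ht), mul_add]
  simp only [Matrix.mul_assoc]
  rfl

theorem integral_lossPhi_mul_weight_eq_ekiZ_mul (hΓ : Γ.PosDef) (hΓ₀ : Γ₀.PosDef) (ht : 0 ≤ t) :
    ∫ u, lossPhi K L A Γ udag u * (exp (-t * lossPhi K L A Γ udag u) * gaussDensity L u₀ Γ₀ u)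
      = ekiZ K L A Γ Γ₀ u₀ udag t * ∫ u, lossPhi K L A Γ udag u * ekiMu K L A Γ Γ₀ u₀ udag t u := by
  simp only [ekiMu, mul_div_assoc']
  rw [integral_div, mul_div_cancel₀ _ (ekiZ_pos hΓ hΓ₀ ht).ne']

end Model

theorem Z_log_derivative_general (K L : ℕ)
    (A : Matrix (Fin K) (Fin L) ℝ)
    (Γ : Matrix (Fin K) (Fin K) ℝ) (hΓ : Γ.PosDef)
    (Γ₀ : Matrix (Fin L) (Fin L) ℝ) (hΓ₀ : Γ₀.PosDef)
    (u₀ udag : Fin L → ℝ) :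
    ∀ t : ℝ, 0 ≤ t →
      HasDerivWithinAt (ekiZ K L A Γ Γ₀ u₀ udag)
        (ekiZ K L A Γ Γ₀ u₀ udag t *
          (-(1 / 2) * Matrix.trace (densCov L (ekiMu K L A Γ Γ₀ u₀ udag t) * Aᵀ * Γ⁻¹ * A)
           - (1 / 2) * dotProduct
               (fun i => udag i - densMean L (ekiMu K L A Γ Γ₀ u₀ udag t) i)
               ((Aᵀ * Γ⁻¹ * A).mulVec
                 (fun i => udag i - densMean L (ekiMu K L A Γ Γ₀ u₀ udag t) i))))
        (Ici (0:ℝ)) t := by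
  intro t ht
  refine (hasDerivAt_ekiZ hΓ hΓ₀ ht).hasDerivWithinAt.congr_deriv ?_
  rw [integral_lossPhi_mul_weight_eq_ekiZ_mul hΓ hΓ₀ ht, integral_lossPhi_mul_ekiMu hΓ hΓ₀ ht]
  ring

/-- The normalization `Z` is differentiable on `[0,∞)` and for every
`t ≥ 0`,
`Z'(t) = Z(t) · (−½ Tr(Cov_{μ_t} Aᵀ Γ⁻¹ A) − ½ (u† − E_{μ_t})ᵀ Aᵀ Γ⁻¹ A (u† − E_{μ_t}))`,
i.e. `Z'(t)/Z(t)` equals the stated expression. -/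
theorem Z_log_derivative (K L : ℕ) (hK : 1 ≤ K) (hL : 1 ≤ L)
    (A : Matrix (Fin K) (Fin L) ℝ)
    (Γ : Matrix (Fin K) (Fin K) ℝ) (hΓ : Γ.PosDef)
    (Γ₀ : Matrix (Fin L) (Fin L) ℝ) (hΓ₀ : Γ₀.PosDef)
    (u₀ udag : Fin L → ℝ) :
    ∀ t : ℝ, 0 ≤ t →
      HasDerivWithinAt (ekiZ K L A Γ Γ₀ u₀ udag)
        (ekiZ K L A Γ Γ₀ u₀ udag t *
          (-(1 / 2) * Matrix.trace (densCov L (ekiMu K L A Γ Γ₀ u₀ udag t) * Aᵀ * Γ⁻¹ * A)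
           - (1 / 2) * dotProduct
               (fun i => udag i - densMean L (ekiMu K L A Γ Γ₀ u₀ udag t) i)
               ((Aᵀ * Γ⁻¹ * A).mulVec
                 (fun i => udag i - densMean L (ekiMu K L A Γ Γ₀ u₀ udag t) i))))
        (Ici (0:ℝ)) t :=
  Z_log_derivative_general K L A Γ hΓ Γ₀ hΓ₀ u₀ udag

end
end
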